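/- arXiv:1804.10968 — 17 statements merged into one kernel-verified Lean document; each statement's English description precedes it below -/
import Mathlib

section
/- Let k₀, k₁ ≥ 2 and let N be a natural number with 2·N > k₀·k₁ and N > k₀ + k₁ − 1. Then there do not exist continuous maps Φ₀ : (ℕ → Fin N) → (ℕ → Fin k₀) and Φ₁ : (ℕ → Fin N) → (ℕ → Fin k₁) together with a function ψ : Fin k₀ × Fin k₁ → Fin N such that for every c : ℕ → Fin N and every pair (a₀, a₁) such that a₀ occurs infinitely often in Φ₀(c) and a₁ occurs infinitely often in Φ₁(c), the color ψ(a₀, a₁) occurs infinitely often in c. (This is the non-reduction RT¹_N ≰_W RT¹_{k₀} × RT¹_{k₁} of Dzhafarov–Goh–Hirschfeldt–Patey–Pauly, proved for continuous forward maps and finite backward maps.) -/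
/-- Continuity modulus: the value `Φ c x` depends only on a finite prefix of `c`. -/
lemma aux_loc {N K : ℕ} (Φ : (ℕ → Fin N) → ℕ → Fin K) (hΦ : Continuous Φ)
    (c : ℕ → Fin N) (x : ℕ) :
    ∃ M : ℕ, ∀ c' : ℕ → Fin N, (∀ y < M, c' y = c y) → Φ c' x = Φ c x := by
  have hcont : Continuous fun g : ℕ → Fin N => Φ g x := (continuous_apply x).comp hΦ
  have hopen : IsOpen ((fun g : ℕ → Fin N => Φ g x) ⁻¹' {Φ c x}) :=
    hcont.isOpen_preimage _ (isOpen_discrete _)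
  rw [isOpen_pi_iff] at hopen
  obtain ⟨I, t, hI, hsub⟩ := hopen c rfl
  refine ⟨I.sup id + 1, fun c' hc' => ?_⟩
  have hmem : c' ∈ (I : Set ℕ).pi t := by
    intro i hi
    have hi' : i ∈ I := hi
    have hle : i ≤ I.sup id := Finset.le_sup (f := id) hi'
    have : c' i = c i := hc' i (by omega)
    rw [this]
    exact (hI i hi').2
  exact hsub hmem

/-- Pigeonhole: an infinite set of naturals has an infinite fiber under a map to a finite type. -/
lemma aux_fiber {K : Type*} [Finite K] {S : Set ℕ} (hS : S.Infinite) (f : ℕ → K) :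
    ∃ d, {x | x ∈ S ∧ f x = d}.Infinite := by
  by_contra h
  push_neg at h
  have hsub : S ⊆ ⋃ d, {x | x ∈ S ∧ f x = d} := fun x hx => Set.mem_iUnion.2 ⟨f x, hx, rfl⟩
  exact hS ((Set.finite_iUnion h).subset hsub)

/-- RT¹_N ≰_W RT¹_{k₀} × RT¹_{k₁} when 2N > k₀k₁ and N > k₀ + k₁ − 1,
for continuous forward maps and a finite backward map. -/
theorem stmt0 (k₀ k₁ N : ℕ) (hk₀ : 2 ≤ k₀) (hk₁ : 2 ≤ k₁)
    (hN1 : k₀ * k₁ < 2 * N) (hN2 : k₀ + k₁ - 1 < N) :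
    ¬ ∃ (Φ₀ : (ℕ → Fin N) → (ℕ → Fin k₀)) (Φ₁ : (ℕ → Fin N) → (ℕ → Fin k₁))
        (ψ : Fin k₀ × Fin k₁ → Fin N),
      Continuous Φ₀ ∧ Continuous Φ₁ ∧
      ∀ (c : ℕ → Fin N) (a₀ : Fin k₀) (a₁ : Fin k₁),
        {x | Φ₀ c x = a₀}.Infinite → {x | Φ₁ c x = a₁}.Infinite →
        {x | c x = ψ (a₀, a₁)}.Infinite := by
  classical
  rintro ⟨Φ₀, Φ₁, ψ, hc₀, hc₁, H⟩
  -- The mixing construction.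
  have mixing : ∀ u v : Fin N, u ≠ v →
      ∃ c : ℕ → Fin N, (∀ x, c x = u ∨ c x = v) ∧
        (∃ p : Fin k₀ × Fin k₁, ψ p = u ∧
          {x | Φ₀ c x = p.1}.Infinite ∧ {x | Φ₁ c x = p.2}.Infinite) ∧
        (∃ q : Fin k₀ × Fin k₁, ψ q = v ∧
          {x | Φ₀ c x = q.1}.Infinite ∧ {x | Φ₁ c x = q.2}.Infinite) := by
    intro u v huv
    -- one forcing step
    have step_ex : ∀ w : Fin N, (w = u ∨ w = v) → ∀ st : (ℕ → Fin N) × ℕ,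
        (∀ x, st.1 x = u ∨ st.1 x = v) →
        ∃ st' : (ℕ → Fin N) × ℕ,
          (∀ x, st'.1 x = u ∨ st'.1 x = v) ∧
          (∀ x < st.2, st'.1 x = st.1 x) ∧ st.2 < st'.2 ∧
          ∃ p : Fin k₀ × Fin k₁, ψ p = w ∧
            ∃ x₀ x₁ : ℕ, st.2 < x₀ ∧ st.2 < x₁ ∧
              ∀ c'' : ℕ → Fin N, (∀ y < st'.2, c'' y = st'.1 y) →
                Φ₀ c'' x₀ = p.1 ∧ Φ₁ c'' x₁ = p.2 := by
      rintro w hw ⟨c, m⟩ hcuv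
      set c' : ℕ → Fin N := fun x => if x < m then c x else w with hc'def
      have hc'uv : ∀ x, c' x = u ∨ c' x = v := by
        intro x
        by_cases hx : x < m
        · simpa [hc'def, hx] using hcuv x
        · simpa [hc'def, hx] using hw
      obtain ⟨d₀, hd₀⟩ := aux_fiber (Set.infinite_univ) (fun x => Φ₀ c' x)
      obtain ⟨d₁, hd₁⟩ := aux_fiber (Set.infinite_univ) (fun x => Φ₁ c' x)
      simp only [Set.mem_univ, true_and] at hd₀ hd₁
      have hψw : ψ (d₀, d₁) = w := by
        have hinf := H c' d₀ d₁ hd₀ hd₁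
        by_contra hne
        apply hinf
        apply (Set.finite_Iio m).subset
        intro x hx
        simp only [Set.mem_setOf_eq] at hx
        rw [Set.mem_Iio]
        by_contra hxm
        push_neg at hxm
        have hcw : c' x = w := by
          simp only [hc'def]
          rw [if_neg (by omega)]
        exact hne (hx.symm.trans hcw)
      obtain ⟨x₀, hx₀S, hx₀m⟩ := hd₀.exists_gt m
      obtain ⟨x₁, hx₁S, hx₁m⟩ := hd₁.exists_gt m
      obtain ⟨M₀, hM₀⟩ := aux_loc Φ₀ hc₀ c' x₀
      obtain ⟨M₁, hM₁⟩ := aux_loc Φ₁ hc₁ c' x₁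
      refine ⟨(c', max (m + 1) (max M₀ M₁)), hc'uv, ?_, by omega,
        ⟨(d₀, d₁), hψw, x₀, x₁, hx₀m, hx₁m, ?_⟩⟩
      · intro x hx
        simp only [hc'def]
        rw [if_pos hx]
      · intro c'' hc''
        constructor
        · rw [hM₀ c'' (fun y hy => hc'' y (by omega))]
          exact hx₀S
        · rw [hM₁ c'' (fun y hy => hc'' y (by omega))]
          exact hx₁S
    choose! f hf1 hf2 hf3 hf4 using step_ex
    set wc : ℕ → Fin N := fun s => if Even s then u else v with hwc
    have hwcuv : ∀ s, wc s = u ∨ wc s = v := by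
      intro s
      by_cases h : Even s <;> simp [hwc, h]
    obtain ⟨g, hg0, hgs⟩ : ∃ g : ℕ → (ℕ → Fin N) × ℕ,
        g 0 = (fun _ => u, 0) ∧ ∀ s, g (s + 1) = f (wc s) (g s) :=
      ⟨fun s => Nat.rec ((fun _ => u), 0) (fun s p => f (wc s) p) s, rfl, fun _ => rfl⟩
    have hinv : ∀ s, ∀ x, (g s).1 x = u ∨ (g s).1 x = v := by
      intro s
      induction s with
      | zero => rw [hg0]; exact fun _ => Or.inl rfl
      | succ s ih => rw [hgs]; exact hf1 (wc s) (hwcuv s) (g s) ih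
    have hA : ∀ s, ∀ x < (g s).2, (g (s + 1)).1 x = (g s).1 x := fun s => by
      rw [hgs]; exact hf2 (wc s) (hwcuv s) (g s) (hinv s)
    have hm : ∀ s, (g s).2 < (g (s + 1)).2 := fun s => by
      rw [hgs]; exact hf3 (wc s) (hwcuv s) (g s) (hinv s)
    have hD : ∀ s, ∃ p : Fin k₀ × Fin k₁, ψ p = wc s ∧
        ∃ x₀ x₁ : ℕ, (g s).2 < x₀ ∧ (g s).2 < x₁ ∧
          ∀ c'', (∀ y < (g (s + 1)).2, c'' y = (g (s + 1)).1 y) →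
            Φ₀ c'' x₀ = p.1 ∧ Φ₁ c'' x₁ = p.2 := fun s => by
      rw [hgs]; exact hf4 (wc s) (hwcuv s) (g s) (hinv s)
    have hms : ∀ s, s ≤ (g s).2 := by
      intro s
      induction s with
      | zero => omega
      | succ s ih => have := hm s; omega
    have hmmono : ∀ s t, s ≤ t → (g s).2 ≤ (g t).2 := by
      intro s t hst
      induction t, hst using Nat.le_induction with
      | base => exact le_rfl
      | succ t hst ih => have := hm t; omega
    have hagree : ∀ s t, s ≤ t → ∀ x < (g s).2, (g t).1 x = (g s).1 x := by
      intro s t hst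
      induction t, hst using Nat.le_induction with
      | base => intro x _; rfl
      | succ t hst ih =>
        intro x hx
        rw [hA t x (lt_of_lt_of_le hx (hmmono s t hst)), ih x hx]
    set climit : ℕ → Fin N := fun x => (g (x + 1)).1 x with hcl
    have hclagree : ∀ s, ∀ x < (g s).2, climit x = (g s).1 x := by
      intro s x hx
      rcases Nat.le_total (x + 1) s with h | h
      · have hx' : x < (g (x + 1)).2 := by have := hms (x + 1); omega
        simpa [hcl] using (hagree (x + 1) s h x hx').symm
      · simpa [hcl] using hagree s (x + 1) h x hx
    have hclv : ∀ x, climit x = u ∨ climit x = v := fun x => hinv (x + 1) x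
    have hstage : ∀ s, ∃ p : Fin k₀ × Fin k₁, ψ p = wc s ∧
        (∃ x₀, s < x₀ ∧ Φ₀ climit x₀ = p.1) ∧ (∃ x₁, s < x₁ ∧ Φ₁ climit x₁ = p.2) := by
      intro s
      obtain ⟨p, hp, x₀, x₁, hx₀, hx₁, hforce⟩ := hD s
      have hfc := hforce climit (fun y hy => hclagree (s + 1) y hy)
      exact ⟨p, hp, ⟨x₀, lt_of_le_of_lt (hms s) hx₀, hfc.1⟩,
        ⟨x₁, lt_of_le_of_lt (hms s) hx₁, hfc.2⟩⟩
    choose P hP1 hP2 hP3 using hstage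
    have hwc_even : ∀ t : ℕ, wc (2 * t) = u := by
      intro t
      simp only [hwc]
      rw [if_pos ⟨t, two_mul t⟩]
    have hwc_odd : ∀ t : ℕ, wc (2 * t + 1) = v := by
      intro t
      simp only [hwc]
      rw [if_neg]
      rintro ⟨r, hr⟩; omega
    obtain ⟨pu, hpu⟩ := Finite.exists_infinite_fiber (fun t : ℕ => P (2 * t))
    obtain ⟨pv, hpv⟩ := Finite.exists_infinite_fiber (fun t : ℕ => P (2 * t + 1))
    have hpuInf : ((fun t : ℕ => P (2 * t)) ⁻¹' {pu}).Infinite := Set.infinite_coe_iff.mp hpu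
    have hpvInf : ((fun t : ℕ => P (2 * t + 1)) ⁻¹' {pv}).Infinite := Set.infinite_coe_iff.mp hpv
    have hψpu : ψ pu = u := by
      obtain ⟨t, ht⟩ := hpuInf.nonempty
      have heq : P (2 * t) = pu := ht
      rw [← heq, hP1, hwc_even]
    have hψpv : ψ pv = v := by
      obtain ⟨t, ht⟩ := hpvInf.nonempty
      have heq : P (2 * t + 1) = pv := ht
      rw [← heq, hP1, hwc_odd]
    have hInf0u : {x | Φ₀ climit x = pu.1}.Infinite := by
      apply Set.infinite_of_forall_exists_gt
      intro n
      obtain ⟨t, htmem, htn⟩ := hpuInf.exists_gt n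
      have heq : P (2 * t) = pu := htmem
      obtain ⟨x₀, hx₀, hx₀eq⟩ := hP2 (2 * t)
      exact ⟨x₀, by rw [Set.mem_setOf_eq, hx₀eq, heq], by omega⟩
    have hInf1u : {x | Φ₁ climit x = pu.2}.Infinite := by
      apply Set.infinite_of_forall_exists_gt
      intro n
      obtain ⟨t, htmem, htn⟩ := hpuInf.exists_gt n
      have heq : P (2 * t) = pu := htmem
      obtain ⟨x₁, hx₁, hx₁eq⟩ := hP3 (2 * t)
      exact ⟨x₁, by rw [Set.mem_setOf_eq, hx₁eq, heq], by omega⟩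
    have hInf0v : {x | Φ₀ climit x = pv.1}.Infinite := by
      apply Set.infinite_of_forall_exists_gt
      intro n
      obtain ⟨t, htmem, htn⟩ := hpvInf.exists_gt n
      have heq : P (2 * t + 1) = pv := htmem
      obtain ⟨x₀, hx₀, hx₀eq⟩ := hP2 (2 * t + 1)
      exact ⟨x₀, by rw [Set.mem_setOf_eq, hx₀eq, heq], by omega⟩
    have hInf1v : {x | Φ₁ climit x = pv.2}.Infinite := by
      apply Set.infinite_of_forall_exists_gt
      intro n
      obtain ⟨t, htmem, htn⟩ := hpvInf.exists_gt n
      have heq : P (2 * t + 1) = pv := htmem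
      obtain ⟨x₁, hx₁, hx₁eq⟩ := hP3 (2 * t + 1)
      exact ⟨x₁, by rw [Set.mem_setOf_eq, hx₁eq, heq], by omega⟩
    exact ⟨climit, hclv, ⟨pu, hψpu, hInf0u, hInf1u⟩, ⟨pv, hψpv, hInf0v, hInf1v⟩⟩
  -- ψ is surjective
  haveI : Nontrivial (Fin N) := by
    have : 2 ≤ N := by omega
    exact Fin.nontrivial_iff_two_le.mpr this
  have hsurj : ∀ w : Fin N, ∃ p : Fin k₀ × Fin k₁, ψ p = w := by
    intro w
    obtain ⟨w', hw'⟩ := exists_ne w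
    obtain ⟨c, _, ⟨p, hp, _, _⟩, _⟩ := mixing w w' (Ne.symm hw')
    exact ⟨p, hp⟩
  -- counting: some fiber is a singleton
  have hsum : (Finset.univ : Finset (Fin k₀ × Fin k₁)).card
      = ∑ w : Fin N, (Finset.univ.filter fun p : Fin k₀ × Fin k₁ => ψ p = w).card :=
    Finset.card_eq_sum_card_fiberwise (fun p _ => Finset.mem_univ (ψ p))
  have hcarduniv : (Finset.univ : Finset (Fin k₀ × Fin k₁)).card = k₀ * k₁ := by
    simp
  have hone : ∃ w : Fin N,
      (Finset.univ.filter fun p : Fin k₀ × Fin k₁ => ψ p = w).card = 1 := by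
    by_contra hno
    push_neg at hno
    have h2 : ∀ w : Fin N, 2 ≤ (Finset.univ.filter fun p : Fin k₀ × Fin k₁ => ψ p = w).card := by
      intro w
      obtain ⟨p, hp⟩ := hsurj w
      have hpos : 0 < (Finset.univ.filter fun p : Fin k₀ × Fin k₁ => ψ p = w).card :=
        Finset.card_pos.mpr ⟨p, Finset.mem_filter.mpr ⟨Finset.mem_univ _, hp⟩⟩
      have := hno w
      omega
    have hge : 2 * N ≤ ∑ w : Fin N, (Finset.univ.filter fun p : Fin k₀ × Fin k₁ => ψ p = w).card := by
      calc 2 * N = ∑ _w : Fin N, 2 := by simp [mul_comm]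
        _ ≤ _ := Finset.sum_le_sum (fun w _ => h2 w)
    omega
  obtain ⟨u₀, hu₀⟩ := hone
  obtain ⟨p₀, hp₀⟩ := Finset.card_eq_one.mp hu₀
  have hψp₀ : ψ p₀ = u₀ := by
    have hmem : p₀ ∈ Finset.univ.filter fun p : Fin k₀ × Fin k₁ => ψ p = u₀ := by
      rw [hp₀]; exact Finset.mem_singleton_self p₀
    exact (Finset.mem_filter.mp hmem).2
  have huniq : ∀ q : Fin k₀ × Fin k₁, ψ q = u₀ → q = p₀ := by
    intro q hq
    have hmem : q ∈ Finset.univ.filter fun p : Fin k₀ × Fin k₁ => ψ p = u₀ :=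
      Finset.mem_filter.mpr ⟨Finset.mem_univ _, hq⟩
    rw [hp₀] at hmem
    exact Finset.mem_singleton.mp hmem
  -- every color has a representative in row p₀.1 or column p₀.2
  have hrep : ∀ w : Fin N, ∃ q : Fin k₀ × Fin k₁, ψ q = w ∧ (q.1 = p₀.1 ∨ q.2 = p₀.2) := by
    intro w
    by_cases hw : w = u₀
    · exact ⟨p₀, hw ▸ hψp₀, Or.inl rfl⟩
    · obtain ⟨c, hcuv, ⟨p, hψp, hp0, hp1⟩, ⟨q, hψq, hq0, hq1⟩⟩ :=
        mixing u₀ w (fun h => hw h.symm)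
      have hp_eq : p = p₀ := huniq p hψp
      have hcross : ψ (p.1, q.2) = u₀ ∨ ψ (p.1, q.2) = w := by
        have hinf := H c p.1 q.2 hp0 hq1
        by_contra hcon
        push_neg at hcon
        apply hinf
        have hempty : {z | c z = ψ (p.1, q.2)} = ∅ := by
          ext z
          simp only [Set.mem_setOf_eq, Set.mem_empty_iff_false, iff_false]
          intro h
          rcases hcuv z with h' | h' <;> rw [h'] at h
          · exact hcon.1 h.symm
          · exact hcon.2 h.symm
        rw [hempty]
        exact Set.finite_empty
      rcases hcross with h | h
      · have heq := huniq _ h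
        exact ⟨q, hψq, Or.inr (by simpa using congrArg Prod.snd heq)⟩
      · exact ⟨(p.1, q.2), h, Or.inl (by rw [hp_eq])⟩
  choose r hr1 hr2 using hrep
  -- injection into a set of size k₀ + k₁ - 1
  have hcard : Fintype.card (Fin N)
      ≤ Fintype.card {s : Sum (Fin k₁) (Fin k₀) // s ≠ Sum.inr p₀.1} := by
    apply Fintype.card_le_of_injective (fun w =>
      if h : (r w).1 = p₀.1 then ⟨Sum.inl (r w).2, by simp⟩
      else ⟨Sum.inr (r w).1, by simpa using h⟩)
    intro w w' hww
    dsimp only at hww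
    have hreq : r w = r w' := by
      by_cases h : (r w).1 = p₀.1 <;> by_cases h' : (r w').1 = p₀.1
      · rw [dif_pos h, dif_pos h'] at hww
        simp only [Subtype.mk.injEq, Sum.inl.injEq] at hww
        exact Prod.ext (h.trans h'.symm) hww
      · rw [dif_pos h, dif_neg h'] at hww
        simp at hww
      · rw [dif_neg h, dif_pos h'] at hww
        simp at hww
      · rw [dif_neg h, dif_neg h'] at hww
        simp only [Subtype.mk.injEq, Sum.inr.injEq] at hww
        exact Prod.ext hww
          (((hr2 w).resolve_left h).trans ((hr2 w').resolve_left h').symm)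
    exact (hr1 w).symm.trans ((congrArg ψ hreq).trans (hr1 w'))
  have hsubcard : Fintype.card {s : Sum (Fin k₁) (Fin k₀) // s ≠ Sum.inr p₀.1}
      = k₁ + k₀ - 1 := by
    rw [Fintype.card_subtype_compl (p := fun s : Sum (Fin k₁) (Fin k₀) => s = Sum.inr p₀.1)]
    simp [Fintype.card_subtype_eq]
  rw [Fintype.card_fin, hsubcard] at hcard
  omega
end

section
/- Let n ≥ 1, let k₀, …, k_n ≥ 2, and let N be a natural number with 2·N > (max_{m ≤ n} k_m) + ∏_{m ≤ n} k_m. Then there do not exist continuous maps Φ_m : (ℕ → Fin N) → (ℕ → Fin k_m) for each m ≤ n together with a function ψ : (∀ m ≤ n, Fin k_m) → Fin N such that for every c : ℕ → Fin N and every tuple (a₀, …, a_n) such that each a_m occurs infinitely often in Φ_m(c), the color ψ(a₀, …, a_n) occurs infinitely often in c. (This is the non-reduction RT¹_N ≰_W ∏_{m ≤ n} RT¹_{k_m} for N > (max k_m + ∏ k_m)/2, proved for continuous forward maps and a finite backward map.) -/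
lemma inf_exists_ge {s : Set ℕ} (hs : s.Infinite) (L : ℕ) : ∃ x ∈ s, L ≤ x := by
  obtain ⟨x, hx⟩ := (hs.diff (Set.finite_Iio L)).nonempty
  exact ⟨x, hx.1, not_lt.mp hx.2⟩

lemma inf_of_ge {s : Set ℕ} (h : ∀ L, ∃ x ∈ s, L ≤ x) : s.Infinite := by
  by_contra hf
  rw [Set.not_infinite] at hf
  obtain ⟨B, hB⟩ := hf.bddAbove
  obtain ⟨x, hx, hBx⟩ := h (B + 1)
  exact absurd (hB hx) (by omega)

lemma exists_inf_color {K : ℕ} (d : ℕ → Fin K) : ∃ v, {x | d x = v}.Infinite := by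
  by_contra h
  push_neg at h
  have huniv : (Set.univ : Set ℕ) = ⋃ v : Fin K, {x | d x = v} := by
    ext x; simp
  exact Set.infinite_univ (huniv ▸ Set.finite_iUnion h)

/-- extend a prefix of length `L` with constant color `col` -/
def extC {N : ℕ} (σ : ℕ → Fin N) (L : ℕ) (col : Fin N) : ℕ → Fin N :=
  fun x => if x < L then σ x else col

lemma modulus {N K : ℕ} {Φ : (ℕ → Fin N) → (ℕ → Fin K)} (hΦ : Continuous Φ)
    (d : ℕ → Fin N) (x : ℕ) :
    ∃ u, ∀ c, (∀ y < u, c y = d y) → Φ c x = Φ d x := by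
  have hg : Continuous fun c : ℕ → Fin N => Φ c x := (continuous_apply x).comp hΦ
  have hopen : IsOpen {c : ℕ → Fin N | Φ c x = Φ d x} := by
    have : {c : ℕ → Fin N | Φ c x = Φ d x} = (fun c => Φ c x) ⁻¹' {Φ d x} := rfl
    rw [this]
    exact hg.isOpen_preimage _ (isOpen_discrete _)
  rw [isOpen_pi_iff] at hopen
  obtain ⟨I, u, hu, hsub⟩ := hopen d rfl
  refine ⟨I.sup id + 1, fun c hc => ?_⟩
  apply hsub
  intro y hy
  have hy' : y ∈ I := hy
  have hcy : c y = d y := hc y (Nat.lt_succ_of_le (Finset.le_sup (f := id) hy'))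
  rw [hcy]
  exact (hu y hy').2


/-- Key lemma: two singleton ψ-fibers differ in at most one coordinate. -/
lemma key (n N : ℕ) (k : Fin (n + 1) → ℕ)
    (Φ : ∀ m : Fin (n + 1), (ℕ → Fin N) → (ℕ → Fin (k m)))
    (ψ : (∀ m, Fin (k m)) → Fin N)
    (hcont : ∀ m, Continuous (Φ m))
    (hred : ∀ (c : ℕ → Fin N) (a : ∀ m, Fin (k m)),
        (∀ m, {x | Φ m c x = a m}.Infinite) → {x | c x = ψ a}.Infinite)
    (i j : Fin N) (b b' : ∀ m, Fin (k m))
    (hbi : ∀ a, ψ a = i → a = b) (hbj : ∀ a, ψ a = j → a = b')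
    (m₁ m₂ : Fin (n + 1)) (h1 : b m₁ ≠ b' m₁) (h2 : b m₂ ≠ b' m₂) : m₁ = m₂ := by
  classical
  by_contra hne
  -- the color and target tuple for stage t
  set col : ℕ → Fin N := fun t => if Even t then i else j with hcol
  set tgt : ℕ → ∀ m, Fin (k m) := fun t => if Even t then b else b' with htgt
  have hcolE : ∀ t, Even t → col t = i := fun t ht => by simp only [hcol]; exact if_pos ht
  have hcolO : ∀ t, ¬Even t → col t = j := fun t ht => by simp only [hcol]; exact if_neg ht
  have htgtE : ∀ t, Even t → tgt t = b := fun t ht => by simp only [htgt]; exact if_pos ht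
  have htgtO : ∀ t, ¬Even t → tgt t = b' := fun t ht => by simp only [htgt]; exact if_neg ht
  -- F1: after any prefix, tgt t m occurs infinitely often in Φ m (σ ⌢ (col t)^∞)
  have F1 : ∀ (t : ℕ) (σ : ℕ → Fin N) (L : ℕ) (m : Fin (n + 1)),
      {x | Φ m (extC σ L (col t)) x = tgt t m}.Infinite := by
    intro t σ L m
    set d := extC σ L (col t) with hd
    choose a ha using fun m => exists_inf_color (Φ m d)
    have h2' := hred d a ha
    obtain ⟨x, hx, hLx⟩ := inf_exists_ge h2' L
    have hdx : d x = col t := by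
      simp only [hd, extC]
      rw [if_neg (by omega)]
    have hψ : ψ a = col t := by rw [← hx, hdx]
    by_cases ht : Even t
    · have hab : a = b := hbi a (by rwa [hcolE t ht] at hψ)
      rw [htgtE t ht, ← hab]
      exact ha m
    · have hab : a = b' := hbj a (by rwa [hcolO t ht] at hψ)
      rw [htgtO t ht, ← hab]
      exact ha m
  -- step: extend the prefix, forcing each Φ m to output tgt t m at a fresh position
  have step : ∀ (t : ℕ) (σ : ℕ → Fin N) (L : ℕ), ∃ L', L < L' ∧
      ∀ m, ∃ x, L ≤ x ∧ ∀ c : ℕ → Fin N,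
        (∀ y < L', c y = extC σ L (col t) y) → Φ m c x = tgt t m := by
    intro t σ L
    set d := extC σ L (col t) with hd
    have hx' := fun m => inf_exists_ge (F1 t σ L m) L
    choose x hx hLx using hx'
    choose u hu using fun m => modulus (hcont m) d (x m)
    refine ⟨(L + 1) ⊔ Finset.univ.sup u,
      lt_of_lt_of_le (Nat.lt_succ_self L) le_sup_left,
      fun m => ⟨x m, hLx m, fun c hc => ?_⟩⟩
    rw [hu m c (fun y hy => hc y (lt_of_lt_of_le hy
      (le_trans (Finset.le_sup (Finset.mem_univ m)) le_sup_right)))]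
    exact hx m
  choose L' hL'lt hL'spec using step
  -- the recursive construction
  set F : ℕ → (ℕ → Fin N) × ℕ := fun t => Nat.rec ((fun _ => i), 0)
      (fun t p => (extC p.1 p.2 (col t), L' t p.1 p.2)) t with hF
  set σs : ℕ → (ℕ → Fin N) := fun t => (F t).1 with hσs
  set Ls : ℕ → ℕ := fun t => (F t).2 with hLs
  have hFsucc1 : ∀ t, σs (t + 1) = extC (σs t) (Ls t) (col t) := fun t => rfl
  have hFsucc2 : ∀ t, Ls (t + 1) = L' t (σs t) (Ls t) := fun t => rfl
  have hLmono : ∀ t, Ls t < Ls (t + 1) := by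
    intro t; rw [hFsucc2]; exact hL'lt t (σs t) (Ls t)
  have hLge : ∀ t, t ≤ Ls t := by
    intro t
    induction t with
    | zero => exact Nat.zero_le _
    | succ t ih => exact Nat.succ_le_of_lt (lt_of_le_of_lt ih (hLmono t))
  have hLmono' : ∀ t t', t ≤ t' → Ls t ≤ Ls t' := by
    intro t t' h
    induction t' with
    | zero => have ht0 : t = 0 := Nat.le_zero.mp h; rw [ht0]
    | succ t' ih =>
      rcases eq_or_lt_of_le h with rfl | hlt
      · exact le_refl _
      · exact le_trans (ih (Nat.lt_succ_iff.mp hlt)) (le_of_lt (hLmono t'))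
  have hagree : ∀ t t', t ≤ t' → ∀ y, y < Ls t → σs t' y = σs t y := by
    intro t t' h
    induction t' with
    | zero =>
      have ht0 : t = 0 := Nat.le_zero.mp h
      subst ht0; intro y _; rfl
    | succ t' ih =>
      intro y hy
      rcases eq_or_lt_of_le h with rfl | hlt
      · rfl
      · have ht' : t ≤ t' := Nat.lt_succ_iff.mp hlt
        rw [hFsucc1]
        have hyL : y < Ls t' := lt_of_lt_of_le hy (hLmono' t t' ht')
        show extC (σs t') (Ls t') (col t') y = σs t y
        rw [extC, if_pos hyL]
        exact ih ht' y hy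
  -- the limit coloring
  set c : ℕ → Fin N := fun x => σs (x + 1) x with hc
  have hcagree : ∀ t y, y < Ls t → c y = σs t y := by
    intro t y hy
    rcases le_or_gt t (y + 1) with h | h
    · exact hagree t (y + 1) h y hy
    · exact (hagree (y + 1) t (le_of_lt h) y
        (lt_of_lt_of_le (Nat.lt_succ_self y) (le_trans (hLge (y + 1)) (le_refl _)))).symm
  have hcval : ∀ x, c x = i ∨ c x = j := by
    have hall : ∀ t y, σs t y = i ∨ σs t y = j := by
      intro t
      induction t with
      | zero => intro y; left; rfl
      | succ t ih =>
        intro y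
        rw [hFsucc1]
        show extC (σs t) (Ls t) (col t) y = i ∨ _ = j
        rw [extC]
        split
        · exact ih y
        · by_cases ht : Even t
          · left; exact hcolE t ht
          · right; exact hcolO t ht
    exact fun x => hall (x + 1) x
  -- forcing along the construction
  have hforce : ∀ t m, ∃ x, Ls t ≤ x ∧ Φ m c x = tgt t m := by
    intro t m
    obtain ⟨x, hLx, hΦx⟩ := hL'spec t (σs t) (Ls t) m
    refine ⟨x, hLx, hΦx c ?_⟩
    intro y hy
    rw [← hFsucc1 t]
    exact hcagree (t + 1) y (by rw [hFsucc2]; exact hy)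
  have hbinf : ∀ m, {x | Φ m c x = b m}.Infinite := by
    intro m
    apply inf_of_ge
    intro B
    obtain ⟨x, hLx, hΦx⟩ := hforce (2 * B) m
    refine ⟨x, ?_, le_trans (le_trans (by omega) (hLge (2 * B))) hLx⟩
    rw [Set.mem_setOf_eq, hΦx, htgtE (2 * B) (even_two_mul B)]
  have hb'inf : ∀ m, {x | Φ m c x = b' m}.Infinite := by
    intro m
    apply inf_of_ge
    intro B
    obtain ⟨x, hLx, hΦx⟩ := hforce (2 * B + 1) m
    refine ⟨x, ?_, le_trans (le_trans (by omega) (hLge (2 * B + 1))) hLx⟩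
    rw [Set.mem_setOf_eq, hΦx,
      htgtO (2 * B + 1) (fun h => (Nat.even_add_one.mp h) (even_two_mul B))]
  -- the mixed tuple
  set a : ∀ m, Fin (k m) := Function.update b m₁ (b' m₁) with ha
  have hainf : ∀ m, {x | Φ m c x = a m}.Infinite := by
    intro m
    by_cases hm : m = m₁
    · subst hm; rw [ha, Function.update_self]; exact hb'inf m
    · rw [ha, Function.update_of_ne hm]; exact hbinf m
  obtain ⟨x, hx, _⟩ := inf_exists_ge (hred c a hainf) 0
  have hψa : ψ a = i ∨ ψ a = j := by
    rcases hcval x with h | h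
    · left; rw [← hx, h]
    · right; rw [← hx, h]
  rcases hψa with h | h
  · have hab : a = b := hbi a h
    have hcf := congrFun hab m₁
    rw [ha, Function.update_self] at hcf
    exact h1 hcf.symm
  · have hab : a = b' := hbj a h
    have hcf := congrFun hab m₂
    rw [ha, Function.update_of_ne (fun hh : m₂ = m₁ => hne hh.symm)] at hcf
    exact h2 hcf


/-- RT¹_N ≰_W ∏_{m ≤ n} RT¹_{k_m} when 2N > max k_m + ∏ k_m,
for continuous forward maps and a finite backward map. -/
theorem stmt2 (n N : ℕ) (hn : 1 ≤ n) (k : Fin (n + 1) → ℕ) (hk : ∀ m, 2 ≤ k m)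
    (hN : Finset.univ.sup k + ∏ m, k m < 2 * N) :
    ¬ ∃ (Φ : ∀ m : Fin (n + 1), (ℕ → Fin N) → (ℕ → Fin (k m)))
        (ψ : (∀ m, Fin (k m)) → Fin N),
      (∀ m, Continuous (Φ m)) ∧
      ∀ (c : ℕ → Fin N) (a : ∀ m, Fin (k m)),
        (∀ m, {x | Φ m c x = a m}.Infinite) →
        {x | c x = ψ a}.Infinite := by
  classical
  rintro ⟨Φ, ψ, hcont, hred⟩
  set M := Finset.univ.sup k with hM
  have hM2 : 2 ≤ M := le_trans (hk 0) (Finset.le_sup (Finset.mem_univ 0))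
  have hkM : ∀ m, k m ≤ M := fun m => Finset.le_sup (Finset.mem_univ m)
  -- fibers of ψ are nonempty
  have hfiber_ne : ∀ i : Fin N, ∃ a, ψ a = i := by
    intro i
    set d : ℕ → Fin N := fun _ => i with hd
    choose a ha using fun m => exists_inf_color (Φ m d)
    obtain ⟨x, hx, _⟩ := inf_exists_ge (hred d a ha) 0
    exact ⟨a, hx.symm⟩
  -- counting setup
  haveI : Nonempty (∀ m, Fin (k m)) := ⟨fun m => ⟨0, by have := hk m; omega⟩⟩
  set Fb : Fin N → Finset (∀ m, Fin (k m)) :=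
    fun i => Finset.univ.filter (fun a => ψ a = i) with hFb
  have hsum : ∑ i, (Fb i).card = ∏ m, k m := by
    have h1 : (Finset.univ : Finset (∀ m, Fin (k m))).card = ∑ i, (Fb i).card :=
      Finset.card_eq_sum_card_fiberwise (fun a _ => Finset.mem_univ (ψ a))
    rw [← h1, Finset.card_univ, Fintype.card_pi]
    simp
  have hne1 : ∀ i, 1 ≤ (Fb i).card := by
    intro i
    obtain ⟨a, hai⟩ := hfiber_ne i
    exact Finset.card_pos.mpr ⟨a, Finset.mem_filter.mpr ⟨Finset.mem_univ a, hai⟩⟩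
  set S : Finset (Fin N) := Finset.univ.filter (fun i => (Fb i).card = 1) with hS
  -- the unique element of a singleton fiber
  set β : Fin N → (∀ m, Fin (k m)) := fun i =>
    if h : ∃ a, Fb i = {a} then h.choose else Classical.arbitrary _ with hβ
  have hβspec : ∀ i ∈ S, ∀ a, ψ a = i ↔ a = β i := by
    intro i hi a
    have hcard : (Fb i).card = 1 := (Finset.mem_filter.mp hi).2
    have hex : ∃ a, Fb i = {a} := Finset.card_eq_one.mp hcard
    have hβi : β i = hex.choose := by simp only [hβ]; exact dif_pos hex
    have hchoose : Fb i = {β i} := by rw [hβi]; exact hex.choose_spec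
    constructor
    · intro hψa
      have hmem : a ∈ Fb i := Finset.mem_filter.mpr ⟨Finset.mem_univ a, hψa⟩
      rw [hchoose, Finset.mem_singleton] at hmem
      exact hmem
    · intro haa
      have hmem : β i ∈ Fb i := by rw [hchoose]; exact Finset.mem_singleton_self _
      rw [haa]
      exact (Finset.mem_filter.mp hmem).2
  have hβψ : ∀ i ∈ S, ψ (β i) = i := fun i hi => (hβspec i hi (β i)).mpr rfl
  have hβinj : ∀ i ∈ S, ∀ j ∈ S, β i = β j → i = j := by
    intro i hi j hj hij
    rw [← hβψ i hi, ← hβψ j hj, hij]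
  -- two singleton fibers differ in exactly one coordinate
  have hpair : ∀ i ∈ S, ∀ j ∈ S, i ≠ j → ∀ m₁ m₂,
      β i m₁ ≠ β j m₁ → β i m₂ ≠ β j m₂ → m₁ = m₂ := by
    intro i hi j hj hij m₁ m₂ hm₁ hm₂
    exact key n N k Φ ψ hcont hred i j (β i) (β j)
      (fun a ha => (hβspec i hi a).mp ha) (fun a ha => (hβspec j hj a).mp ha)
      m₁ m₂ hm₁ hm₂
  -- so there are at most M singleton fibers
  have hScard : S.card ≤ M := by
    by_cases hS2 : S.card ≤ 2
    · omega
    · have h3 : 1 < S.card := by omega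
      obtain ⟨i₀, hi₀, j₀, hj₀, hij₀⟩ := Finset.one_lt_card.mp h3
      have hβne : β i₀ ≠ β j₀ := fun h => hij₀ (hβinj i₀ hi₀ j₀ hj₀ h)
      obtain ⟨ms, hms⟩ := Function.ne_iff.mp hβne
      -- every singleton fiber agrees with β i₀ away from ms
      have hoff : ∀ i ∈ S, ∀ m, m ≠ ms → β i m = β i₀ m := by
        intro i hi m hm
        by_contra hd
        have hii₀ : i ≠ i₀ := by
          intro h; subst h; exact hd rfl
        have huniq : ∀ m', β i₀ m' ≠ β i m' → m' = m :=
          fun m' hm' => hpair i₀ hi₀ i hi hii₀.symm m' m hm' (Ne.symm hd)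
        have hagms : β i₀ ms = β i ms := by
          by_contra hms'
          exact hm (huniq ms hms').symm
        by_cases hij : i = j₀
        · subst hij; exact hms hagms
        · have huniq₀ : ∀ m', β i₀ m' ≠ β j₀ m' → m' = ms :=
            fun m' hm' => hpair i₀ hi₀ j₀ hj₀ hij₀ m' ms hm' hms
          have hd1 : β i m ≠ β j₀ m := by
            have heq : β i₀ m = β j₀ m := by
              by_contra hcon
              exact hm (huniq₀ m hcon)
            rw [← heq]
            exact fun h => hd h
          have hd2 : β i ms ≠ β j₀ ms := by
            rw [← hagms]
            exact hms
          exact hm (hpair i hi j₀ hj₀ hij m ms hd1 hd2)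
      -- the map i ↦ β i ms is injective on S
      have hinj : Set.InjOn (fun i => β i ms) S := by
        intro i hi j hj hij
        by_contra hne
        have hβij : β i ≠ β j := fun h => hne (hβinj i hi j hj h)
        obtain ⟨m₀, hm₀⟩ := Function.ne_iff.mp hβij
        have hm₀s : m₀ = ms := by
          by_contra hcon
          exact hm₀ ((hoff i hi m₀ hcon).trans (hoff j hj m₀ hcon).symm)
        subst hm₀s
        exact hm₀ hij
      have hle := Finset.card_le_card_of_injOn (fun i => β i ms)
        (fun a _ => Finset.mem_univ _) hinj
      simp only [Finset.card_univ, Fintype.card_fin] at hle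
      exact le_trans hle (hkM ms)
  -- final count
  have hsplit : ∑ i ∈ Finset.univ \ S, (Fb i).card + ∑ i ∈ S, (Fb i).card
      = ∑ i, (Fb i).card := Finset.sum_sdiff (Finset.subset_univ S)
  have hS1 : S.card ≤ ∑ i ∈ S, (Fb i).card := by
    calc S.card = ∑ _i ∈ S, 1 := by rw [Finset.sum_const, smul_eq_mul, mul_one]
    _ ≤ ∑ i ∈ S, (Fb i).card := Finset.sum_le_sum (fun i _ => hne1 i)
  have hS2' : 2 * (N - S.card) ≤ ∑ i ∈ Finset.univ \ S, (Fb i).card := by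
    have hcard2 : ∀ i ∈ Finset.univ \ S, 2 ≤ (Fb i).card := by
      intro i hi
      have h1 := hne1 i
      have hno : ¬((Fb i).card = 1) := by
        intro h
        exact (Finset.mem_sdiff.mp hi).2 (Finset.mem_filter.mpr ⟨Finset.mem_univ i, h⟩)
      omega
    calc 2 * (N - S.card) = (Finset.univ \ S).card * 2 := by
          rw [Finset.card_sdiff_of_subset (Finset.subset_univ S), Finset.card_univ,
            Fintype.card_fin, Nat.mul_comm]
    _ = ∑ _i ∈ Finset.univ \ S, 2 := by rw [Finset.sum_const, smul_eq_mul]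
    _ ≤ ∑ i ∈ Finset.univ \ S, (Fb i).card := Finset.sum_le_sum hcard2
  have hSN : S.card ≤ N := by
    have hle := Finset.card_le_card (Finset.subset_univ S)
    rwa [Finset.card_univ, Fintype.card_fin] at hle
  omega
end

section
/- Let n ≥ 1, let k₀, …, k_n ≥ 2, and let N be a natural number with 2·N > 2 + ∏_{m ≤ n} k_m and 3·N > 3·((max_{m ≤ n} k_m) − 1) + ∏_{m ≤ n} k_m. Then there do not exist continuous maps Φ_m : (ℕ → Fin N) → (ℕ → Fin k_m) for each m ≤ n together with a function ψ : (∀ m ≤ n, Fin k_m) → Fin N such that for every c : ℕ → Fin N and every tuple (a₀, …, a_n) such that each a_m occurs infinitely often in Φ_m(c), the color ψ(a₀, …, a_n) occurs infinitely often in c. (This is the non-reduction RT¹_N ≰_W ∏_{m ≤ n} RT¹_{k_m} for N > max{(2 + ∏ k_m)/2, max k_m − 1 + (∏ k_m)/3}.) -/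
/-!
A reduction `(Φ, ψ)` forces a combinatorial property of `ψ` alone: for any two colours `v`, `w`,
a Baire category argument in the space of `{v, w}`-colourings yields a colouring `c` in which some
tuples `α ∈ ψ⁻¹ v` and `β ∈ ψ⁻¹ w` are both realised infinitely often by the `Φ m c`. Then every
tuple of the box spanned by `α` and `β` is realised too, so `ψ` maps that box into `{v, w}`.

This box property is then refuted by counting. The first bound on `N` gives three colours with
singleton fibres; the box property puts their points at pairwise Hamming distance one, hence on a
common line in some direction `m`, and puts every fibre of size at most two within distance one of
each of them; such a fibre cannot hold three points with distinct `m`-th coordinates, so it meets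
that line. Hence there are at most `k m` such fibres, which contradicts the second bound on `N`.
-/

open Filter Function Finset

theorem dense_setOf_eventually_eq {S : Type*} [TopologicalSpace S] (u : S) :
    Dense {s : ℕ → S | ∀ᶠ x in atTop, s x = u} := by
  intro s
  refine mem_closure_of_tendsto (f := fun t x => if x < t then s x else u) (b := atTop)
    (tendsto_pi_nhds.2 fun x => tendsto_const_nhds.congr' ?_) (.of_forall fun t => ?_)
  · exact (eventually_gt_atTop x).mono fun t ht => (if_pos ht).symm
  · exact (eventually_ge_atTop t).mono fun x hx => if_neg (not_lt.2 hx)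

theorem infinite_of_forall_exists_ge {s : Set ℕ} (h : ∀ b, ∃ x ≥ b, x ∈ s) : s.Infinite :=
  Nat.frequently_atTop_iff_infinite.mp (frequently_atTop.mpr h)

section Reduction

variable {ι C : Type*} {κ : ι → Type*}

def IsInfColorReduction (Φ : ∀ i, (ℕ → C) → ℕ → κ i) (ψ : (∀ i, κ i) → C) : Prop :=
  ∀ (c : ℕ → C) (a : ∀ i, κ i), (∀ i, {x | Φ i c x = a i}.Infinite) → {x | c x = ψ a}.Infinite

def AdmitsColorBoxes (ψ : (∀ i, κ i) → C) : Prop :=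
  ∀ v w, ∃ α β, ψ α = v ∧ ψ β = w ∧ Set.MapsTo ψ (Set.univ.pi fun i => {α i, β i}) {v, w}

variable {Φ : ∀ i, (ℕ → C) → ℕ → κ i} {ψ : (∀ i, κ i) → C}

theorem IsInfColorReduction.exists_eq_of_eventually_eq [∀ i, Finite (κ i)]
    (hψ : IsInfColorReduction Φ ψ) {c : ℕ → C} {v : C} (hc : ∀ᶠ x in atTop, c x = v) :
    ∃ a, ψ a = v ∧ ∀ i, {x | Φ i c x = a i}.Infinite := by
  have hfiber (i : ι) : ∃ a : κ i, {x | Φ i c x = a}.Infinite :=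
    (Finite.exists_infinite_fiber (Φ i c)).imp fun _ => Set.infinite_coe_iff.mp
  choose a ha using hfiber
  obtain ⟨x, hxa, hxv⟩ :=
    ((Nat.frequently_atTop_iff_infinite.mpr (hψ c a ha)).and_eventually hc).exists
  exact ⟨a, hxa.symm.trans hxv, ha⟩

variable [TopologicalSpace C] [Finite ι] [∀ i, Finite (κ i)] [∀ i, TopologicalSpace (κ i)]
  [∀ i, DiscreteTopology (κ i)]

theorem IsInfColorReduction.exists_seq_forall_exists (hΦ : ∀ i, Continuous (Φ i))
    (hψ : IsInfColorReduction Φ ψ) {S : Type*} [TopologicalSpace S] [DiscreteTopology S]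
    [Finite S] [Nonempty S] (e : S → C) :
    ∃ s : ℕ → S, ∀ u, ∃ a, ψ a = e u ∧ ∀ i, {x | Φ i (e ∘ s) x = a i}.Infinite := by
  -- Baire category: each `D (u, b)` is open by continuity and dense since it contains every
  -- sequence that is eventually `u`.
  let D (p : S × ℕ) : Set (ℕ → S) :=
    {s | ∃ a, ψ a = e p.1 ∧ ∀ i, ∃ x ≥ p.2, Φ i (e ∘ s) x = a i}
  have hopen (p : S × ℕ) : IsOpen (D p) := by
    have hcont (i : ι) (x : ℕ) : Continuous fun s : ℕ → S => Φ i (e ∘ s) x := by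
      fun_prop
    simp only [D, Set.ofPred_exists, Set.ofPred_and, Set.ofPred_forall]
    exact isOpen_iUnion fun a => isOpen_const.inter <| isOpen_iInter_of_finite fun i =>
      isOpen_iUnion fun x => isOpen_const.inter <| (isOpen_discrete {a i}).preimage (hcont i x)
  have hdense (p : S × ℕ) : Dense (D p) := by
    refine (dense_setOf_eventually_eq p.1).mono fun s hs => ?_
    obtain ⟨a, hψa, ha⟩ :=
      hψ.exists_eq_of_eventually_eq (c := e ∘ s) (v := e p.1) (hs.mono fun x hx => by simp [hx])
    exact ⟨a, hψa, fun i => ((ha i).exists_gt p.2).imp fun x hx => ⟨hx.2.le, hx.1⟩⟩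
  obtain ⟨s, hs⟩ := (dense_iInter_of_isOpen hopen hdense).nonempty
  refine ⟨s, fun u => ?_⟩
  choose a hψa x hbx hxa using fun b => Set.mem_iInter.mp hs (u, b)
  obtain ⟨a₀, ha₀⟩ := Finite.exists_infinite_fiber a
  have ha₀ : {b | a b = a₀}.Infinite := Set.infinite_coe_iff.mp ha₀
  obtain ⟨b₀, hb₀⟩ := ha₀.nonempty
  refine ⟨a₀, hb₀ ▸ hψa b₀, fun i => infinite_of_forall_exists_ge fun B => ?_⟩
  obtain ⟨b, hb, hBb⟩ := ha₀.exists_gt B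
  exact ⟨x b i, hBb.le.trans (hbx b i), hb ▸ hxa b i⟩

theorem IsInfColorReduction.admitsColorBoxes (hΦ : ∀ i, Continuous (Φ i))
    (hψ : IsInfColorReduction Φ ψ) : AdmitsColorBoxes ψ := by
  intro v w
  obtain ⟨s, hs⟩ := hψ.exists_seq_forall_exists hΦ fun b : Bool => cond b v w
  obtain ⟨α, hα, hαinf⟩ := hs true
  obtain ⟨β, hβ, hβinf⟩ := hs false
  refine ⟨α, β, hα, hβ, fun γ hγ => ?_⟩
  have hγinf (i : ι) : {x | Φ i ((fun b : Bool => cond b v w) ∘ s) x = γ i}.Infinite := by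
    rcases hγ i (Set.mem_univ i) with h | h <;> rw [h]
    exacts [hαinf i, hβinf i]
  obtain ⟨x, hx⟩ := (hψ _ γ hγinf).nonempty
  rw [← Set.mem_ofPred_eq.mp hx, comp_apply]
  cases s x <;> simp

end Reduction

section Hamming

variable {ι : Type*} [Fintype ι] [DecidableEq ι] {κ : ι → Type*} [∀ i, DecidableEq (κ i)]

theorem eq_update_of_hammingDist_le_one {x y : ∀ i, κ i} (h : hammingDist x y ≤ 1) {i : ι}
    (hi : x i ≠ y i) : y = update x i (y i) := by
  refine eq_update_iff.mpr ⟨rfl, fun j hj => ?_⟩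
  by_contra hne
  exact hj (Finset.card_le_one.mp h j (by simpa [eq_comm] using hne) i (by simpa using hi))

theorem exists_forall_eq_update_of_hammingDist_le_one {T : Finset (∀ i, κ i)} (hT : 1 < #T)
    (h : ∀ α ∈ T, ∀ β ∈ T, hammingDist α β ≤ 1) : ∃ a i, ∀ α ∈ T, α = update a i (α i) := by
  obtain ⟨a, ha, b, hb, hab⟩ := one_lt_card.mp hT
  obtain ⟨i, hi⟩ := Function.ne_iff.mp hab
  refine ⟨a, i, fun γ hγ => ?_⟩
  by_cases hγi : a i = γ i
  · have hbγ := eq_update_of_hammingDist_le_one (h b hb γ hγ) (hγi ▸ hi.symm)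
    have hab' := eq_update_of_hammingDist_le_one (h a ha b hb) hi
    refine eq_update_iff.mpr ⟨rfl, fun j hj => ?_⟩
    rw [hbγ, update_of_ne hj, hab', update_of_ne hj]
  · exact eq_update_of_hammingDist_le_one (h a ha γ hγ) hγi

end Hamming

theorem succ_mul_card_le_sum_add_mul_card_filter_le {C : Type*} [Fintype C] (f : C → ℕ)
    (hf : ∀ z, 1 ≤ f z) (r : ℕ) :
    (r + 1) * Fintype.card C ≤ ∑ z, f z + r * #{z | f z ≤ r} :=
  calc (r + 1) * Fintype.card C = ∑ _z : C, (r + 1) := by simp [mul_comm]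
    _ ≤ ∑ z, (f z + r * if f z ≤ r then 1 else 0) :=
      sum_le_sum fun z _ => by have := hf z; split_ifs <;> omega
    _ = ∑ z, f z + r * #{z | f z ≤ r} := by rw [sum_add_distrib, ← mul_sum, card_filter]

section Boxes

variable {ι C : Type*} [Fintype ι] [DecidableEq ι] [DecidableEq C] {κ : ι → Type*}
  [∀ i, Fintype (κ i)] [∀ i, DecidableEq (κ i)] {ψ : (∀ i, κ i) → C}

theorem AdmitsColorBoxes.exists_hammingDist_le_one (h : AdmitsColorBoxes ψ) {α : ∀ i, κ i}
    (hα : #{γ | ψ γ = ψ α} ≤ 1) {z : C} (hz : #{γ | ψ γ = z} ≤ 2) :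
    ∃ β, ψ β = z ∧ hammingDist α β ≤ 1 := by
  obtain ⟨α', β, hα', hβ, hbox⟩ := h (ψ α) z
  obtain rfl : α' = α := card_le_one.mp hα α' (by simpa using hα') α (by simp)
  refine ⟨β, hβ, not_lt.mp fun hd => ?_⟩
  obtain ⟨i, hi, j, hj, hij⟩ := one_lt_card.mp hd
  simp only [mem_filter, mem_univ, true_and] at hi hj
  -- The corners `update α' l (β l)` for `l ∈ {i, j}` leave the fibre `{α'}` of `ψ α'`, so with
  -- `β` they are three points of the fibre of `z`.
  have hcorner (l : ι) (hl : α' l ≠ β l) : ψ (update α' l (β l)) = z := by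
    have hmem : update α' l (β l) ∈ Set.univ.pi fun i => {α' i, β i} := fun i _ => by
      rcases eq_or_ne i l with rfl | hil <;> simp [*]
    refine (hbox hmem).resolve_left fun hv => hl ?_
    have := card_le_one.mp hα _ (by simpa using hv) α' (by simp)
    simpa using (congrFun this l).symm
  have : 2 < #{γ | ψ γ = z} := two_lt_card_iff.mpr ⟨β, update α' i (β i), update α' j (β j),
    by simp [hβ], by simp [hcorner i hi], by simp [hcorner j hj],
    fun e => hj (by simpa [update_of_ne hij.symm] using (congrFun e j).symm),
    fun e => hi (by simpa [update_of_ne hij] using (congrFun e i).symm),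
    fun e => hi (by simpa [update_of_ne hij] using (congrFun e i).symm)⟩
  omega

theorem AdmitsColorBoxes.exists_update_eq (h : AdmitsColorBoxes ψ) {T : Finset (∀ i, κ i)}
    (hT : 2 < #T) (hT1 : ∀ α ∈ T, #{γ | ψ γ = ψ α} ≤ 1) {a : ∀ i, κ i} {i : ι}
    (hline : ∀ α ∈ T, α = update a i (α i)) {z : C} (hz : #{γ | ψ γ = z} ≤ 2) :
    ∃ x, ψ (update a i x) = z := by
  by_contra! hoff
  have hnear (α) (hα : α ∈ T) : ∃ β, ψ β = z ∧ β i = α i := by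
    obtain ⟨β, hβ, hd⟩ := h.exists_hammingDist_le_one (hT1 α hα) hz
    refine ⟨β, hβ, of_not_not fun hne => hoff (β i) ?_⟩
    have hβα := eq_update_of_hammingDist_le_one hd (Ne.symm hne)
    rw [hline α hα, update_idem] at hβα
    rwa [← hβα]
  choose! β hβz hβi using hnear
  have : #T ≤ #{γ | ψ γ = z} := card_le_card_of_injOn β (fun α hα => by simp [hβz α hα])
    fun α hα α' hα' e => by
      have : α i = α' i := by rw [← hβi α hα, ← hβi α' hα', e]
      rw [hline α hα, hline α' hα', this]
  omega

theorem not_admitsColorBoxes_of_card_lt {ι C : Type*} [Fintype ι] [DecidableEq ι] [Fintype C]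
    {κ : ι → Type*} [∀ i, Fintype (κ i)]
    (h₁ : 2 + Fintype.card (∀ i, κ i) < 2 * Fintype.card C)
    (h₂ : 3 * (univ.sup (fun i => Fintype.card (κ i)) - 1) + Fintype.card (∀ i, κ i)
      < 3 * Fintype.card C) (ψ : (∀ i, κ i) → C) : ¬ AdmitsColorBoxes ψ := by
  classical
  intro h
  set fib : C → ℕ := fun z => #{γ | ψ γ = z}
  have hfib : ∀ z, 1 ≤ fib z := fun z =>
    let ⟨α, _, hα, _⟩ := h z z; card_pos.mpr ⟨α, by simpa using hα⟩
  have hsum : ∑ z, fib z = Fintype.card (∀ i, κ i) :=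
    (card_eq_sum_card_fiberwise fun _ _ => mem_univ _).symm
  have hS := succ_mul_card_le_sum_add_mul_card_filter_le fib hfib 1
  have hB := succ_mul_card_le_sum_add_mul_card_filter_le fib hfib 2
  set T : Finset (∀ i, κ i) := {α | fib (ψ α) ≤ 1}
  have hT : 2 < #T := by
    have : #{z | fib z ≤ 1} ≤ #T := card_le_card_of_surjOn ψ fun z hz => by
      obtain ⟨α, hα⟩ := card_pos.mp (hfib z)
      simp only [mem_filter, mem_univ, true_and] at hα
      exact ⟨α, by simpa [T, hα] using hz, hα⟩
    omega
  have hT1 (α) (hα : α ∈ T) : fib (ψ α) ≤ 1 := by simpa [T] using hα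
  obtain ⟨a, i, hline⟩ := exists_forall_eq_update_of_hammingDist_le_one (T := T) (by omega)
    fun α hα β hβ => by
      obtain ⟨β', hβ', hd⟩ :=
        h.exists_hammingDist_le_one (hT1 α hα) (z := ψ β) ((hT1 β hβ).trans one_le_two)
      rwa [card_le_one.mp (hT1 β hβ) β' (by simpa using hβ') β (by simp)] at hd
  have hBi : #{z | fib z ≤ 2} ≤ Fintype.card (κ i) := by
    rw [← card_univ]
    refine card_le_card_of_surjOn (fun x => ψ (update a i x)) fun z hz => ?_
    obtain ⟨x, hx⟩ := h.exists_update_eq hT hT1 hline (by simpa using hz)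
    exact ⟨x, mem_univ x, hx⟩
  have hiK := le_sup (f := fun i => Fintype.card (κ i)) (mem_univ i)
  omega

theorem stmt3_general (n N : ℕ) (k : Fin (n + 1) → ℕ)
    (hN1 : 2 + ∏ m, k m < 2 * N)
    (hN2 : 3 * (Finset.univ.sup k - 1) + ∏ m, k m < 3 * N) :
    ¬ ∃ (Φ : ∀ m : Fin (n + 1), (ℕ → Fin N) → (ℕ → Fin (k m)))
        (ψ : (∀ m, Fin (k m)) → Fin N),
      (∀ m, Continuous (Φ m)) ∧
      ∀ (c : ℕ → Fin N) (a : ∀ m, Fin (k m)),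
        (∀ m, {x | Φ m c x = a m}.Infinite) →
        {x | c x = ψ a}.Infinite := by
  rintro ⟨Φ, ψ, hΦ, hψ⟩
  refine not_admitsColorBoxes_of_card_lt ?_ ?_ ψ (IsInfColorReduction.admitsColorBoxes hΦ hψ)
  · simpa [Fintype.card_pi] using hN1
  · simpa [Fintype.card_pi] using hN2

/-- RT¹_N ≰_W ∏_{m ≤ n} RT¹_{k_m} when 2N > 2 + ∏ k_m and
3N > 3(max k_m − 1) + ∏ k_m, for continuous forward maps and a finite backward map. -/
theorem stmt3 (n N : ℕ) (hn : 1 ≤ n) (k : Fin (n + 1) → ℕ) (hk : ∀ m, 2 ≤ k m)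
    (hN1 : 2 + ∏ m, k m < 2 * N)
    (hN2 : 3 * (Finset.univ.sup k - 1) + ∏ m, k m < 3 * N) :
    ¬ ∃ (Φ : ∀ m : Fin (n + 1), (ℕ → Fin N) → (ℕ → Fin (k m)))
        (ψ : (∀ m, Fin (k m)) → Fin N),
      (∀ m, Continuous (Φ m)) ∧
      ∀ (c : ℕ → Fin N) (a : ∀ m, Fin (k m)),
        (∀ m, {x | Φ m c x = a m}.Infinite) →
        {x | c x = ψ a}.Infinite :=
  stmt3_general n N k hN1 hN2
end Boxes
end

section
/- Let ψ : Fin 4 × Fin 4 → Fin 8 be a function each of whose fibers ψ⁻¹{i} has exactly two elements. Then there exist pairwise distinct i₀, i₁, i₂ < 8 such that, writing F_j = ψ⁻¹{i_j} and U = F_{i₀} ∪ F_{i₁} ∪ F_{i₂}: (1) there are no pairs p₀ ∈ F_{i₀}, p₁ ∈ F_{i₁}, p₂ ∈ F_{i₂} all having the same first coordinate or all having the same second coordinate; and (2) there are no a₀ ≠ a₁ and b₀ ≠ b₁ in Fin 4 such that all four pairs (a₀,b₀), (a₀,b₁), (a₁,b₀), (a₁,b₁) lie in U with each of F_{i₀},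 F_{i₁}, F_{i₂} containing at least one of them. (Hence some collection of three fibers of ψ is not bad.) -/
/-
Count triples of fibers: there are C(8,3) = 56 of them. A triple bad in the first way is a set of
three values taken on one row or one column. A line meeting t fibers and containing h whole fibers
has t + h ≤ 4, hence carries at most C(t,3) ≤ 4 - 2h such triples. A triple bad in the second way
is the value set of a 2×2 rectangle; four cells with three values force a whole fiber into the
rectangle, and a fiber lies in one rectangle, or in three if it is horizontal or vertical. The
penalties 2h pay exactly for these extra rectangles, so there are at most 16 + 16 + 8 = 40 < 56
bad triples.
-/

open Finset

namespace GridFibers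

section Fibers

variable {α γ : Type*} [Fintype α] [DecidableEq γ]

def fiber (ψ : α → γ) (i : γ) : Finset α := {p | ψ p = i}

@[simp] lemma mem_fiber {ψ : α → γ} {p : α} {i : γ} : p ∈ fiber ψ i ↔ ψ p = i := by simp [fiber]

variable [DecidableEq α]

lemma card_filter_image_subset_singleton {ρ : Type*} [Fintype ρ] [DecidableEq ρ] (f : α → ρ)
    (F : Finset α) : #{r | F.image f ⊆ {r}} = #{r | F ⊆ fiber f r} := by
  simp [subset_iff]

variable [Fintype γ] {ψ : α → γ}

lemma filter_fiber_subset_subset_image (hψ : ∀ i, (fiber ψ i).Nonempty) (L : Finset α) :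
    ({i | fiber ψ i ⊆ L} : Finset γ) ⊆ L.image ψ := fun i hi =>
  have ⟨p, hp⟩ := hψ i
  mem_image.mpr ⟨p, (mem_filter.mp hi).2 hp, mem_fiber.mp hp⟩

lemma card_image_add_card_filter_fiber_subset_le (hψ : ∀ i, #(fiber ψ i) = 2) (L : Finset α) :
    #(L.image ψ) + #{i | fiber ψ i ⊆ L} ≤ #L := by
  have hne : ∀ i, (fiber ψ i).Nonempty := fun i => card_pos.mp (by simp [hψ i])
  calc #(L.image ψ) + #{i | fiber ψ i ⊆ L}
      = ∑ i ∈ L.image ψ, (1 + if fiber ψ i ⊆ L then 1 else 0) := by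
        have hsub := filter_fiber_subset_subset_image hne L
        rw [sum_add_distrib, sum_boole, card_eq_sum_ones, Nat.cast_id]
        congr 2
        ext i
        simpa using fun h => hsub (mem_filter.mpr ⟨mem_univ i, h⟩)
    _ ≤ ∑ i ∈ L.image ψ, #{p ∈ L | ψ p = i} := by
        refine sum_le_sum fun i hi => ?_
        obtain ⟨p, hpL, rfl⟩ := mem_image.mp hi
        split_ifs with h
        · have : {q ∈ L | ψ q = ψ p} = fiber ψ (ψ p) := by
            ext q; simpa using fun hq => h (mem_fiber.mpr hq)
          simp [this, hψ]
        · exact card_pos.mpr ⟨p, mem_filter.mpr ⟨hpL, rfl⟩⟩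
    _ = #L := (card_eq_sum_card_fiberwise fun _ => mem_image_of_mem ψ).symm

end Fibers

lemma choose_three_add_two_mul_le_four {t h : ℕ} (hht : h ≤ t) (hth : t + h ≤ 4) :
    t.choose 3 + 2 * h ≤ 4 := by
  have ht : t ≤ 4 := by omega
  interval_cases t <;> simp [Nat.choose] <;> omega

section Lines

variable {α ρ γ : Type*} [Fintype α] [Fintype ρ] [DecidableEq ρ] [DecidableEq γ]
  {ψ : α → γ} {π : α → ρ}

def lineTriples (ψ : α → γ) (π : α → ρ) : Finset (Finset γ) :=
  univ.biUnion fun r => powersetCard 3 ((fiber π r).image ψ)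

lemma insert_mem_lineTriples {p₀ p₁ p₂ : α} (h₀₁ : ψ p₀ ≠ ψ p₁) (h₀₂ : ψ p₀ ≠ ψ p₂)
    (h₁₂ : ψ p₁ ≠ ψ p₂) (h₁ : π p₀ = π p₁) (h₂ : π p₁ = π p₂) :
    {ψ p₀, ψ p₁, ψ p₂} ∈ lineTriples ψ π := by
  refine mem_biUnion.mpr ⟨π p₀, mem_univ _, mem_powersetCard.mpr ⟨?_, card_eq_three.mpr
    ⟨_, _, _, h₀₁, h₀₂, h₁₂, rfl⟩⟩⟩
  simp only [insert_subset_iff, singleton_subset_iff]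
  exact ⟨mem_image_of_mem ψ (by simp), mem_image_of_mem ψ (by simp [h₁]),
    mem_image_of_mem ψ (by simp [h₁, h₂])⟩

lemma card_lineTriples_add_le [DecidableEq α] [Fintype γ] (hψ : ∀ i, #(fiber ψ i) = 2)
    (hπ : ∀ r, #(fiber π r) = 4) :
    #(lineTriples ψ π) + 2 * ∑ r, #{i | fiber ψ i ⊆ fiber π r} ≤ 4 * Fintype.card ρ := by
  have hne : ∀ i, (fiber ψ i).Nonempty := fun i => card_pos.mp (by simp [hψ i])
  calc #(lineTriples ψ π) + 2 * ∑ r, #{i | fiber ψ i ⊆ fiber π r}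
      ≤ ∑ r, ((#((fiber π r).image ψ)).choose 3 + 2 * #{i | fiber ψ i ⊆ fiber π r}) := by
        rw [sum_add_distrib, ← mul_sum]
        gcongr
        exact card_biUnion_le.trans_eq (by simp [card_powersetCard])
    _ ≤ ∑ r : ρ, 4 := sum_le_sum fun r _ => choose_three_add_two_mul_le_four
          (card_le_card (filter_fiber_subset_subset_image hne _))
          ((card_image_add_card_filter_fiber_subset_le hψ _).trans (hπ r).le)
    _ = 4 * Fintype.card ρ := by simp [mul_comm]

end Lines

section Rectangles

variable {β δ γ : Type*} [DecidableEq β] [DecidableEq δ]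

lemma subset_product_iff {F : Finset (β × δ)} {A : Finset β} {B : Finset δ} :
    F ⊆ A ×ˢ B ↔ F.image Prod.fst ⊆ A ∧ F.image Prod.snd ⊆ B := by
  simp only [subset_iff, mem_product, mem_image, forall_exists_index, and_imp,
    forall_apply_eq_imp_iff₂, ← forall_and]

lemma coe_pair_product_pair (a₀ a₁ : β) (b₀ b₁ : δ) :
    (({a₀, a₁} ×ˢ {b₀, b₁} : Finset (β × δ)) : Set (β × δ)) =
      {(a₀, b₀), (a₀, b₁), (a₁, b₀), (a₁, b₁)} := by
  ext ⟨x, y⟩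
  simp only [Set.mem_insert_iff, Set.mem_singleton_iff, Prod.mk.injEq, coe_product,
    coe_pair, Set.mem_prod, or_and_right, and_or_left, or_assoc]
  exact or_congr_right or_left_comm

variable [Fintype β] [Fintype δ] [Fintype γ] [DecidableEq γ] {ψ : β × δ → γ}

variable (β δ) in
def rectangles : Finset (Finset β × Finset δ) := powersetCard 2 univ ×ˢ powersetCard 2 univ

-- Indexed by a whole fiber inside the rectangle, so that rectangles are counted fiber by fiber.
def rectangleImages (ψ : β × δ → γ) : Finset (Finset γ) :=
  univ.biUnion fun i =>
    {R ∈ rectangles β δ | fiber ψ i ⊆ R.1 ×ˢ R.2}.image fun R => (R.1 ×ˢ R.2).image ψ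

lemma image_mem_rectangleImages (hψ : ∀ i, #(fiber ψ i) = 2) {A : Finset β} {B : Finset δ}
    (hA : #A = 2) (hB : #B = 2) (hψAB : #((A ×ˢ B).image ψ) < 4) :
    (A ×ˢ B).image ψ ∈ rectangleImages ψ := by
  obtain ⟨p, hp, q, hq, hpq, hψpq⟩ := exists_ne_map_eq_of_card_lt_of_maps_to (s := A ×ˢ B)
    (by simpa [hA, hB] using hψAB) (fun x hx => mem_image_of_mem ψ hx)
  have hfib : fiber ψ (ψ p) = {p, q} :=
    (eq_of_subset_of_card_le (by simp [insert_subset_iff, hψpq]) (by simp [hψ, hpq])).symm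
  refine mem_biUnion.mpr ⟨ψ p, mem_univ _, mem_image.mpr ⟨(A, B), ?_, rfl⟩⟩
  simpa [rectangles, hA, hB, hfib, insert_subset_iff] using ⟨mem_product.mp hp, mem_product.mp hq⟩

lemma card_rectangleImages_le :
    #(rectangleImages ψ) ≤ ∑ i, #{R ∈ rectangles β δ | fiber ψ i ⊆ R.1 ×ˢ R.2} :=
  card_biUnion_le.trans (sum_le_sum fun _ _ => card_image_le)

end Rectangles

section Grid

lemma card_filter_powersetCard_two_superset_le :
    ∀ s : Finset (Fin 4), s.Nonempty →
      #{A ∈ powersetCard 2 univ | s ⊆ A} ≤ 1 + 2 * #{r | s ⊆ {r}} := by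
  decide

variable {γ : Type*} [DecidableEq γ] {ψ : Fin 4 × Fin 4 → γ}

lemma card_filter_rectangles_le (hψ : ∀ i, #(fiber ψ i) = 2) (i : γ) :
    #{R ∈ rectangles (Fin 4) (Fin 4) | fiber ψ i ⊆ R.1 ×ˢ R.2} ≤
      1 + 2 * #{r | fiber ψ i ⊆ fiber Prod.fst r} + 2 * #{c | fiber ψ i ⊆ fiber Prod.snd c} := by
  set F := fiber ψ i
  have hF : F.Nonempty := card_pos.mp (by simp [F, hψ i])
  have hprod : {R ∈ rectangles (Fin 4) (Fin 4) | F ⊆ R.1 ×ˢ R.2} =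
      {A ∈ powersetCard 2 (univ : Finset (Fin 4)) | F.image Prod.fst ⊆ A} ×ˢ
        {B ∈ powersetCard 2 (univ : Finset (Fin 4)) | F.image Prod.snd ⊆ B} := by
    ext ⟨A, B⟩
    simp only [rectangles, mem_filter, mem_product, subset_product_iff]
    tauto
  have hrow := card_filter_powersetCard_two_superset_le _ (hF.image Prod.fst)
  have hcol := card_filter_powersetCard_two_superset_le _ (hF.image Prod.snd)
  rw [card_filter_image_subset_singleton] at hrow hcol
  have hdiag : #{r | F ⊆ fiber Prod.fst r} * #{c | F ⊆ fiber Prod.snd c} = 0 := by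
    by_contra h
    obtain ⟨r, hr⟩ := card_pos.mp (Nat.pos_of_ne_zero (left_ne_zero_of_mul h))
    obtain ⟨c, hc⟩ := card_pos.mp (Nat.pos_of_ne_zero (right_ne_zero_of_mul h))
    have hsub : F ⊆ {(r, c)} := fun p hp => by
      simpa [Prod.ext_iff] using
        ⟨mem_fiber.mp ((mem_filter.mp hr).2 hp), mem_fiber.mp ((mem_filter.mp hc).2 hp)⟩
    simpa [F, hψ] using card_le_card hsub
  rw [hprod, card_product]
  nlinarith [Nat.mul_le_mul hrow hcol]

variable [Fintype γ]

lemma card_rectangleImages_le_card_add (hψ : ∀ i, #(fiber ψ i) = 2) :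
    #(rectangleImages ψ) ≤ Fintype.card γ + 2 * ∑ r, #{i | fiber ψ i ⊆ fiber Prod.fst r}
      + 2 * ∑ c, #{i | fiber ψ i ⊆ fiber Prod.snd c} := by
  calc #(rectangleImages ψ)
      ≤ ∑ i, (1 + 2 * #{r | fiber ψ i ⊆ fiber Prod.fst r}
          + 2 * #{c | fiber ψ i ⊆ fiber Prod.snd c}) :=
        card_rectangleImages_le.trans (sum_le_sum fun i _ => card_filter_rectangles_le hψ i)
    _ = _ := by
        have hrow : ∑ i, #{r | fiber ψ i ⊆ fiber Prod.fst r} =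
            ∑ r, #{i | fiber ψ i ⊆ fiber Prod.fst r} :=
          sum_card_bipartiteAbove_eq_sum_card_bipartiteBelow _
        have hcol : ∑ i, #{c | fiber ψ i ⊆ fiber Prod.snd c} =
            ∑ c, #{i | fiber ψ i ⊆ fiber Prod.snd c} :=
          sum_card_bipartiteAbove_eq_sum_card_bipartiteBelow _
        simp [sum_add_distrib, ← mul_sum, hrow, hcol]

lemma exists_triple_not_mem (hψ : ∀ i, #(fiber ψ i) = 2) (hγ : Fintype.card γ = 8) :
    ∃ s ∈ powersetCard 3 (univ : Finset γ),
      s ∉ lineTriples ψ Prod.fst ∪ lineTriples ψ Prod.snd ∪ rectangleImages ψ := by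
  by_contra! h
  have hrow := card_lineTriples_add_le hψ (π := Prod.fst) (by decide)
  have hcol := card_lineTriples_add_le hψ (π := Prod.snd) (by decide)
  have hrect := card_rectangleImages_le_card_add hψ
  have hsub := card_le_card h
  have hunion := card_union_le (lineTriples ψ Prod.fst ∪ lineTriples ψ Prod.snd)
    (rectangleImages ψ)
  have hlines := card_union_le (lineTriples ψ Prod.fst) (lineTriples ψ Prod.snd)
  rw [card_powersetCard, card_univ, hγ, show Nat.choose 8 3 = 56 from rfl] at hsub
  rw [Fintype.card_fin] at hrow hcol
  rw [hγ] at hrect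
  omega

end Grid

end GridFibers

open GridFibers in
/-- If every fiber of ψ : Fin 4 × Fin 4 → Fin 8 has exactly two elements, then
some collection of three fibers is not bad: neither three pairs (one per fiber)
in a common row/column, nor a rectangle within the union meeting all three fibers. -/
theorem stmt5 (ψ : Fin 4 × Fin 4 → Fin 8)
    (hfib : ∀ i : Fin 8, Set.ncard {p | ψ p = i} = 2) :
    ∃ i₀ i₁ i₂ : Fin 8, i₀ ≠ i₁ ∧ i₀ ≠ i₂ ∧ i₁ ≠ i₂ ∧
      (¬ ∃ p₀ p₁ p₂ : Fin 4 × Fin 4, ψ p₀ = i₀ ∧ ψ p₁ = i₁ ∧ ψ p₂ = i₂ ∧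
        ((p₀.1 = p₁.1 ∧ p₁.1 = p₂.1) ∨ (p₀.2 = p₁.2 ∧ p₁.2 = p₂.2))) ∧
      (¬ ∃ (a₀ a₁ b₀ b₁ : Fin 4), a₀ ≠ a₁ ∧ b₀ ≠ b₁ ∧
        (∀ p ∈ ({(a₀, b₀), (a₀, b₁), (a₁, b₀), (a₁, b₁)} : Set (Fin 4 × Fin 4)),
          ψ p = i₀ ∨ ψ p = i₁ ∨ ψ p = i₂) ∧
        (∀ j ∈ ({i₀, i₁, i₂} : Set (Fin 8)),
          ∃ p ∈ ({(a₀, b₀), (a₀, b₁), (a₁, b₀), (a₁, b₁)} : Set (Fin 4 × Fin 4)),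
            ψ p = j)) := by
  have hψ : ∀ i, #(fiber ψ i) = 2 := fun i => by
    rw [← hfib i, Set.ncard_eq_toFinset_card']
    simp [fiber]
  obtain ⟨s, hs, hgood⟩ := exists_triple_not_mem hψ (Fintype.card_fin 8)
  obtain ⟨i₀, i₁, i₂, h₀₁, h₀₂, h₁₂, rfl⟩ := card_eq_three.mp (mem_powersetCard.mp hs).2
  simp only [mem_union, not_or] at hgood
  obtain ⟨⟨hrow, hcol⟩, hrect⟩ := hgood
  refine ⟨i₀, i₁, i₂, h₀₁, h₀₂, h₁₂, ?_, ?_⟩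
  · rintro ⟨p₀, p₁, p₂, rfl, rfl, rfl, ⟨h₁, h₂⟩ | ⟨h₁, h₂⟩⟩
    · exact hrow (insert_mem_lineTriples h₀₁ h₀₂ h₁₂ h₁ h₂)
    · exact hcol (insert_mem_lineTriples h₀₁ h₀₂ h₁₂ h₁ h₂)
  · rintro ⟨a₀, a₁, b₀, b₁, ha, hb, hmem, hsur⟩
    rw [← coe_pair_product_pair] at hmem hsur
    have himage : ({a₀, a₁} ×ˢ {b₀, b₁} : Finset (Fin 4 × Fin 4)).image ψ = {i₀, i₁, i₂} := by
      refine Subset.antisymm (image_subset_iff.mpr fun p hp => by simpa using hmem p hp)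
        fun j hj => ?_
      obtain ⟨p, hp, rfl⟩ := hsur j (by simpa using hj)
      exact mem_image_of_mem ψ hp
    refine hrect (himage ▸ image_mem_rectangleImages hψ (card_pair ha) (card_pair hb) ?_)
    simp [himage, card_eq_three.mpr ⟨_, _, _, h₀₁, h₀₂, h₁₂, rfl⟩]
end

section
/- Let n ≥ 1, let k₀, …, k_n ≥ 2, and set N = 1 + Σ_{m=0}^{n} (k_m − 1). Then there exist, for each m ≤ n, a function f_m : List (Fin N) → Fin k_m, together with a function ψ : (∀ m ≤ n, Fin k_m) → Fin N, with the following property: for every c : ℕ → Fin N, defining d_m : ℕ → Fin k_m by d_m(x) = f_m([c(0), …, c(x)]), and for every tuple (a₀, …, a_n) such that each a_m occurs infinitely often in d_m, the color ψ(a₀, …, a_n) occurs infinitely often in c. (This witnesses the reduction RT¹_{1+Σ(k_m−1)} ≤_sW ∏_{m ≤ n} RT¹_{k_m}: the forward maps are determined by finite prefixes of the input, hence continuous.) -/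
/-- Forward map: look at the last element of `σ` with value ≥ `r`, clamp. -/
def myF (N r km : ℕ) (σ : List (Fin N)) : ℕ :=
  (σ.reverse.find? (fun v => decide (r ≤ (v : ℕ)))).elim 0
    (fun v => min ((v : ℕ) - r) (km - 1))

lemma myF_le (N r km : ℕ) (σ : List (Fin N)) : myF N r km σ ≤ km - 1 := by
  unfold myF
  cases h : σ.reverse.find? (fun v => decide (r ≤ (v : ℕ))) <;> simp [h]

lemma myF_append (N r km : ℕ) (l : List (Fin N)) (v : Fin N) :
    myF N r km (l ++ [v]) =
      if r ≤ (v : ℕ) then min ((v : ℕ) - r) (km - 1) else myF N r km l := by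
  unfold myF
  rw [List.reverse_append]
  simp only [List.reverse_singleton, List.singleton_append, List.find?_cons]
  by_cases h : r ≤ (v : ℕ) <;> simp [h]

lemma myF_spec (N r km : ℕ) (c : ℕ → Fin N) :
    ∀ x t', t' ≤ x → r ≤ (c t' : ℕ) →
      ∃ t, t' ≤ t ∧ t ≤ x ∧ r ≤ (c t : ℕ) ∧
        myF N r km ((List.range (x + 1)).map c) = min ((c t : ℕ) - r) (km - 1) := by
  intro x
  induction x with
  | zero =>
    intro t' h1 h2
    have ht0 : t' = 0 := by omega
    subst ht0
    refine ⟨0, le_refl _, le_refl _, h2, ?_⟩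
    have h3 : (List.range 1).map c = [] ++ [c 0] := by
      simp [List.range_succ]
    rw [h3, myF_append, if_pos h2]
  | succ x ih =>
    intro t' h1 h2
    have hpre : (List.range (x + 2)).map c = (List.range (x + 1)).map c ++ [c (x + 1)] := by
      rw [List.range_succ, List.map_append]; simp
    rw [hpre, myF_append]
    by_cases hb : r ≤ (c (x + 1) : ℕ)
    · exact ⟨x + 1, by omega, le_refl _, hb, by rw [if_pos hb]⟩
    · have ht'x : t' ≤ x := by
        rcases Nat.lt_succ_iff_lt_or_eq.mp (Nat.lt_succ_of_le h1) with h | h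
        · omega
        · exact absurd (h ▸ h2) hb
      obtain ⟨t, h3, h4, h5, h6⟩ := ih t' ht'x h2
      exact ⟨t, h3, by omega, h5, by rw [if_neg hb]; exact h6⟩

lemma myF_core (N r km j : ℕ) (c : ℕ → Fin N)
    (hB : {t | r ≤ (c t : ℕ)}.Infinite)
    (hd : {x | myF N r km ((List.range (x + 1)).map c) = j}.Infinite) :
    {t | r ≤ (c t : ℕ) ∧ min ((c t : ℕ) - r) (km - 1) = j}.Infinite := by
  by_contra hfin
  rw [Set.not_infinite] at hfin
  obtain ⟨T, hT⟩ := hfin.bddAbove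
  obtain ⟨t', ht'B, ht'T⟩ := hB.exists_gt T
  refine hd (Set.Finite.subset (Set.finite_Iio t') ?_)
  intro x hx
  by_contra hxt'
  simp only [Set.mem_Iio, not_lt] at hxt'
  obtain ⟨t, h1, h2, h3, h4⟩ := myF_spec N r km c x t' hxt' ht'B
  have htmem : t ∈ {t | r ≤ (c t : ℕ) ∧ min ((c t : ℕ) - r) (km - 1) = j} := by
    refine ⟨h3, ?_⟩
    rw [← h4]; exact hx
  have := hT htmem
  omega

/-- RT¹_{1+Σ(k_m−1)} ≤_sW ∏_{m ≤ n} RT¹_{k_m}: there are forward maps determined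
by finite prefixes of the input and a finite backward map witnessing the reduction. -/
theorem stmt6 (n : ℕ) (hn : 1 ≤ n) (k : Fin (n + 1) → ℕ) (hk : ∀ m, 2 ≤ k m) :
    ∃ (f : ∀ m : Fin (n + 1), List (Fin (1 + ∑ j, (k j - 1))) → Fin (k m))
      (ψ : (∀ m, Fin (k m)) → Fin (1 + ∑ j, (k j - 1))),
      ∀ (c : ℕ → Fin (1 + ∑ j, (k j - 1))) (a : ∀ m, Fin (k m)),
        (∀ m, {x | f m ((List.range (x + 1)).map c) = a m}.Infinite) →
        {x | c x = ψ a}.Infinite := by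
  classical
  obtain ⟨K, hKk⟩ : ∃ K : ℕ → ℕ, ∀ m : Fin (n + 1), K (m : ℕ) = k m :=
    ⟨fun i => if h : i < n + 1 then k ⟨i, h⟩ else 2, fun m => by simp [m.isLt]⟩
  obtain ⟨s, hs0, hs_succ⟩ : ∃ s : ℕ → ℕ, s 0 = 0 ∧ ∀ i, s (i + 1) = s i + (K i - 1) :=
    ⟨fun i => ∑ j ∈ Finset.range i, (K j - 1), by simp, fun i => Finset.sum_range_succ _ i⟩
  have hs_sum : ∀ i, s i = ∑ j ∈ Finset.range i, (K j - 1) := by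
    intro i
    induction i with
    | zero => simpa using hs0
    | succ i ih => rw [hs_succ, ih, Finset.sum_range_succ]
  have hs_mono : ∀ i i', i ≤ i' → s i ≤ s i' := by
    intro i i' h
    rw [hs_sum, hs_sum]
    exact Finset.sum_le_sum_of_subset (Finset.range_subset_range.mpr h)
  have hstop : s (n + 1) = ∑ j, (k j - 1) := by
    calc s (n + 1) = ∑ j ∈ Finset.range (n + 1), (K j - 1) := hs_sum _
      _ = ∑ j : Fin (n + 1), (K (j : ℕ) - 1) :=
          (Fin.sum_univ_eq_sum_range (fun i => K i - 1) (n + 1)).symm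
      _ = ∑ j, (k j - 1) := Finset.sum_congr rfl (fun m _ => by rw [hKk m])
  have hN0 : 0 < 1 + ∑ j, (k j - 1) := by omega
  refine ⟨fun m σ => ⟨myF _ (s (m : ℕ)) (k m) σ, ?_⟩,
    fun a => ⟨(if h : ∃ i, ∃ hi : i < n + 1, ((a ⟨i, hi⟩ : ℕ) < k ⟨i, hi⟩ - 1) then
        s (Nat.find h) + (a ⟨Nat.find h, (Nat.find_spec h).choose⟩ : ℕ)
      else ∑ j, (k j - 1)) % (1 + ∑ j, (k j - 1)), Nat.mod_lt _ hN0⟩, ?_⟩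
  · have h1 := myF_le (1 + ∑ j, (k j - 1)) (s (m : ℕ)) (k m) σ
    have h2 := hk m
    omega
  intro c a H
  have Hm : ∀ m : Fin (n + 1),
      {x | myF (1 + ∑ j, (k j - 1)) (s (m : ℕ)) (k m) ((List.range (x + 1)).map c)
        = (a m : ℕ)}.Infinite := by
    intro m
    have := H m
    simp only [Fin.ext_iff] at this
    exact this
  have QQ : ∀ i, i ≤ n + 1 →
      (∀ j : Fin (n + 1), (j : ℕ) < i → (a j : ℕ) = k j - 1) →
      {t | s i ≤ (c t : ℕ)}.Infinite := by
    intro i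
    induction i with
    | zero =>
      intro _ _
      have huniv : {t : ℕ | s 0 ≤ (c t : ℕ)} = Set.univ := by
        ext t; simp [hs0]
      rw [huniv]; exact Set.infinite_univ
    | succ i ih =>
      intro hi hmax
      have hi' : i < n + 1 := by omega
      have hBi := ih (by omega) (fun j hj => hmax j (by omega))
      have hdm := Hm ⟨i, hi'⟩
      rw [hmax ⟨i, hi'⟩ (Nat.lt_succ_self i)] at hdm
      have hcore := myF_core _ (s i) (k ⟨i, hi'⟩) (k ⟨i, hi'⟩ - 1) c hBi hdm
      apply hcore.mono
      rintro t ⟨h1, h2⟩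
      have h3 := hs_succ i
      have h4 := hKk ⟨i, hi'⟩
      have h5 := hk ⟨i, hi'⟩
      have h6 : k ⟨i, hi'⟩ - 1 ≤ (c t : ℕ) - s i := by
        by_contra hcon
        push_neg at hcon
        rw [min_eq_left (le_of_lt hcon)] at h2
        omega
      simp only [Set.mem_setOf_eq]
      calc s (i + 1) = s i + (k ⟨i, hi'⟩ - 1) := by rw [hs_succ i, h4]
        _ ≤ s i + ((c t : ℕ) - s i) := Nat.add_le_add_left h6 _
        _ = (c t : ℕ) := by omega
  by_cases hex : ∃ i, ∃ hi : i < n + 1, ((a ⟨i, hi⟩ : ℕ) < k ⟨i, hi⟩ - 1)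
  · obtain ⟨hi₀, ha₀⟩ := Nat.find_spec hex
    have hmax : ∀ j : Fin (n + 1), (j : ℕ) < Nat.find hex → (a j : ℕ) = k j - 1 := by
      intro j hj
      have hmin := Nat.find_min hex hj
      push_neg at hmin
      have h2 := hmin j.isLt
      have h3 : (⟨(j : ℕ), j.isLt⟩ : Fin (n + 1)) = j := by ext; rfl
      rw [h3] at h2
      have h4 := (a j).isLt
      omega
    have hB := QQ (Nat.find hex) (by omega) hmax
    have hcore := myF_core _ (s (Nat.find hex)) (k ⟨Nat.find hex, hi₀⟩)
      ((a ⟨Nat.find hex, hi₀⟩ : ℕ)) c hB (Hm ⟨Nat.find hex, hi₀⟩)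
    apply hcore.mono
    rintro t ⟨h1, h2⟩
    simp only [Set.mem_setOf_eq]
    have hkm := hk ⟨Nat.find hex, hi₀⟩
    have h6 : (c t : ℕ) - s (Nat.find hex) = (a ⟨Nat.find hex, hi₀⟩ : ℕ) := by
      rcases le_total ((c t : ℕ) - s (Nat.find hex)) (k ⟨Nat.find hex, hi₀⟩ - 1) with hc | hc
      · rw [min_eq_left hc] at h2; exact h2
      · rw [min_eq_right hc] at h2; omega
    have hval : (c t : ℕ) = s (Nat.find hex) + (a ⟨Nat.find hex, hi₀⟩ : ℕ) := by omega
    have hlt : s (Nat.find hex) + (a ⟨Nat.find hex, hi₀⟩ : ℕ) < 1 + ∑ j, (k j - 1) := by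
      have h3 := hs_succ (Nat.find hex)
      have h4 := hKk ⟨Nat.find hex, hi₀⟩
      have h5 := hs_mono (Nat.find hex + 1) (n + 1) (by omega)
      omega
    apply Fin.ext
    show (c t : ℕ) = (if h : ∃ i, ∃ hi : i < n + 1, ((a ⟨i, hi⟩ : ℕ) < k ⟨i, hi⟩ - 1) then
        s (Nat.find h) + (a ⟨Nat.find h, (Nat.find_spec h).choose⟩ : ℕ)
      else ∑ j, (k j - 1)) % (1 + ∑ j, (k j - 1))
    rw [dif_pos hex]
    have e1 : (a ⟨Nat.find hex, (Nat.find_spec hex).choose⟩ : ℕ)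
        = (a ⟨Nat.find hex, hi₀⟩ : ℕ) := rfl
    rw [e1, Nat.mod_eq_of_lt hlt]
    exact hval
  · push_neg at hex
    have hmax : ∀ j : Fin (n + 1), (j : ℕ) < n + 1 → (a j : ℕ) = k j - 1 := by
      intro j _
      have h2 := hex (j : ℕ) j.isLt
      have h3 : (⟨(j : ℕ), j.isLt⟩ : Fin (n + 1)) = j := by ext; rfl
      rw [h3] at h2
      have h4 := (a j).isLt
      omega
    have hB := QQ (n + 1) le_rfl hmax
    apply hB.mono
    intro t ht
    simp only [Set.mem_setOf_eq] at ht ⊢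
    rw [hstop] at ht
    have h4 := (c t).isLt
    apply Fin.ext
    show (c t : ℕ) = (if h : ∃ i, ∃ hi : i < n + 1, ((a ⟨i, hi⟩ : ℕ) < k ⟨i, hi⟩ - 1) then
        s (Nat.find h) + (a ⟨Nat.find h, (Nat.find_spec h).choose⟩ : ℕ)
      else ∑ j, (k j - 1)) % (1 + ∑ j, (k j - 1))
    rw [dif_neg (by push_neg; exact hex)]
    rw [Nat.mod_eq_of_lt (by omega)]
    omega
end

section
/- Let n ≥ 1 and k₀, …, k_n ≥ 2, and suppose there are functions Φ : (∀ m ≤ n, ℕ → Fin k_m) → (ℕ → Fin N) and ψ : Fin N → (∀ m ≤ n, Fin k_m) such that for every family of colorings c_m : ℕ → Fin k_m (m ≤ n) and every i < N that occurs infinitely often in Φ((c_m)_m), for each m ≤ n the color ψ(i)(m) occurs infinitely often in c_m. Then ψ is surjective; in particular N ≥ ∏_{m ≤ n} k_m. (Hence a reduction of ∏ RT¹_{k_m} to RT¹_N, even with arbitrary non-computable forward map and a backward map depending only on the returned color, forces N ≥ ∏ k_m.) -/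
/-- Any reduction of ∏_{m ≤ n} RT¹_{k_m} to RT¹_N with a backward map depending
only on the returned color forces ψ surjective, hence N ≥ ∏ k_m. -/
theorem stmt7 (n N : ℕ) (hn : 1 ≤ n) (k : Fin (n + 1) → ℕ) (hk : ∀ m, 2 ≤ k m)
    (Φ : (∀ m : Fin (n + 1), ℕ → Fin (k m)) → (ℕ → Fin N))
    (ψ : Fin N → ∀ m : Fin (n + 1), Fin (k m))
    (h : ∀ (c : ∀ m : Fin (n + 1), ℕ → Fin (k m)) (i : Fin N),
      {x | Φ c x = i}.Infinite →
      ∀ m, {x | c m x = ψ i m}.Infinite) :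
    Function.Surjective ψ ∧ ∏ m, k m ≤ N := by
  have hsurj : Function.Surjective ψ := by
    intro v
    set c : ∀ m : Fin (n + 1), ℕ → Fin (k m) := fun m _ => v m with hc
    obtain ⟨i, hi⟩ := Finite.exists_infinite_fiber (Φ c)
    have hi' : {x | Φ c x = i}.Infinite := by
      have : {x | Φ c x = i} = Φ c ⁻¹' {i} := by ext x; simp
      rw [this]; exact Set.infinite_coe_iff.mp hi
    refine ⟨i, ?_⟩
    funext m
    have := h c i hi' m
    obtain ⟨x, hx⟩ := this.nonempty
    exact hx.symm
  refine ⟨hsurj, ?_⟩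
  have := Fintype.card_le_of_surjective ψ hsurj
  simpa using this
end

section
/- Let I_P, I_Q ⊆ (ℕ → ℕ) be sets of instances and let P, Q : (ℕ → ℕ) → Set ℕ assign solution sets. Assume: (i) (finite tolerance) there is Θ : ℕ → ℕ → ℕ such that whenever C₀, C₁ ∈ I_P agree at every x ≥ m and s ∈ P(C₀), then Θ(s)(m) ∈ P(C₁); (ii) every C₁ : ℕ → ℕ that agrees with some C₀ ∈ I_P at all but finitely many points lies in I_P; (iii) there is a finite set B ⊆ ℕ with P(C) ⊆ B for all C ∈ I_P and Q(C) ⊆ B for all C ∈ I_Q. Suppose there exist a continuous Φ : (ℕ → ℕ) → (ℕ → ℕ) and a continuous Ψ : (ℕ → ℕ) × ℕ → ℕ such that for every C ∈ I_P we have Φ(C) ∈ I_Q and Ψ(C, s) ∈ P(C) for every s ∈ Q(Φ(C)). Then there exist a continuous Φ' : (ℕ → ℕ) → (ℕ → ℕ) and a function ψ' : ℕ → ℕ such that for every C ∈ I_P we have Φ'(C) ∈ I_Q and ψ'(s) ∈ P(C) for every s ∈ Q(Φ'(C)). (A Weihrauch reduction between such problems can be upgraded to a strong one whose backward map ignores the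 instance.) -/
/-- A Weihrauch reduction between problems with finite tolerance, instance sets
closed under finite modification, and uniformly finite solution sets can be
upgraded to a strong one whose backward map ignores the instance. -/
theorem stmt9 (IP IQ : Set (ℕ → ℕ)) (P Q : (ℕ → ℕ) → Set ℕ)
    (Θ : ℕ → ℕ → ℕ)
    (htol : ∀ C₀ C₁, C₀ ∈ IP → C₁ ∈ IP → ∀ m : ℕ,
      (∀ x, m ≤ x → C₀ x = C₁ x) → ∀ s ∈ P C₀, Θ s m ∈ P C₁)
    (hmod : ∀ C₀ ∈ IP, ∀ C₁ : ℕ → ℕ, {x | C₀ x ≠ C₁ x}.Finite → C₁ ∈ IP)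
    (B : Finset ℕ)
    (hPB : ∀ C ∈ IP, P C ⊆ ↑B) (hQB : ∀ C ∈ IQ, Q C ⊆ ↑B)
    (Φ : (ℕ → ℕ) → (ℕ → ℕ)) (hΦ : Continuous Φ)
    (Ψ : (ℕ → ℕ) × ℕ → ℕ) (hΨ : Continuous Ψ)
    (hred : ∀ C ∈ IP, Φ C ∈ IQ ∧ ∀ s ∈ Q (Φ C), Ψ (C, s) ∈ P C) :
    ∃ (Φ' : (ℕ → ℕ) → (ℕ → ℕ)) (ψ' : ℕ → ℕ),
      Continuous Φ' ∧ ∀ C ∈ IP, Φ' C ∈ IQ ∧ ∀ s ∈ Q (Φ' C), ψ' s ∈ P C := by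
  classical
  rcases Set.eq_empty_or_nonempty IP with hIP | ⟨Cs, hCs⟩
  · exact ⟨Φ, id, hΦ, fun C hC => by simp [hIP] at hC⟩
  -- moduli of continuity of Ψ at (Cs, s)
  have hmodulus : ∀ s : ℕ, ∃ n : ℕ, ∀ D : ℕ → ℕ,
      (∀ x < n, D x = Cs x) → Ψ (D, s) = Ψ (Cs, s) := by
    intro s
    have hg : Continuous (fun D : ℕ → ℕ => Ψ (D, s)) :=
      hΨ.comp (continuous_id.prodMk continuous_const)
    have hU : IsOpen ((fun D : ℕ → ℕ => Ψ (D, s)) ⁻¹' {Ψ (Cs, s)}) :=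
      hg.isOpen_preimage _ (isOpen_discrete _)
    rw [isOpen_pi_iff] at hU
    obtain ⟨I, u, h1, h2⟩ := hU Cs rfl
    refine ⟨I.sup id + 1, fun D hD => ?_⟩
    have : D ∈ (↑I : Set ℕ).pi u := by
      intro i hi
      have hlt : i < I.sup id + 1 := Nat.lt_succ_of_le (Finset.le_sup (f := id) hi)
      rw [hD i hlt]
      exact (h1 i hi).2
    exact h2 this
  choose n hn using hmodulus
  set N : ℕ := B.sup n with hN
  set τ : (ℕ → ℕ) → (ℕ → ℕ) := fun C x => if x < N then Cs x else C x with hτ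
  have hτcont : Continuous τ := by
    refine continuous_pi fun x => ?_
    by_cases h : x < N <;> simp only [hτ, h, if_true, if_false]
    · exact continuous_const
    · exact continuous_apply x
  have hτIP : ∀ C ∈ IP, τ C ∈ IP := by
    intro C hC
    refine hmod C hC (τ C) (Set.Finite.subset (Set.finite_Iio N) ?_)
    intro x hx
    simp only [hτ, Set.mem_setOf_eq] at hx
    by_contra h
    simp [Set.mem_Iio, not_lt] at h
    exact hx (by simp [if_neg (not_lt.2 h)])
  have hτeq : ∀ C : ℕ → ℕ, ∀ x, N ≤ x → τ C x = C x := fun C x hx => by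
    simp [hτ, not_lt.2 hx]
  refine ⟨fun C => Φ (τ C), fun s => Θ (Ψ (Cs, s)) N, hΦ.comp hτcont, fun C hC => ?_⟩
  have hτC := hτIP C hC
  obtain ⟨hQmem, hback⟩ := hred (τ C) hτC
  refine ⟨hQmem, fun s hs => ?_⟩
  have hsB : s ∈ B := hQB _ hQmem hs
  have hPs : Ψ (τ C, s) ∈ P (τ C) := hback s hs
  have hΨeq : Ψ (τ C, s) = Ψ (Cs, s) := by
    refine hn s (τ C) fun x hx => ?_
    have : x < N := lt_of_lt_of_le hx (Finset.le_sup hsB)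
    simp [hτ, this]
  show Θ (Ψ (Cs, s)) N ∈ P C
  rw [← hΨeq]
  exact htol (τ C) C hτC hC N (hτeq C) _ hPs
end

section
/- Let k₀, k₁ ≥ 2 and let N be a natural number with 2·N > k₀·k₁ and N > k₀ + k₁ − 1, and let ψ be a surjective partial function from Fin k₀ × Fin k₁ to Fin N. Then there exist a pair (a₀, a₁) in the domain of ψ whose fiber is a singleton (i.e., ψ(b₀, b₁) = ψ(a₀, a₁) implies (b₀, b₁) = (a₀, a₁)) and a value i < N with i ≠ ψ(a₀, a₁) such that every (b₀, b₁) with ψ(b₀, b₁) = i satisfies b₀ ≠ a₀ and b₁ ≠ a₁. -/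
/-!
Since `2 N > k₀ k₁`, pigeonhole gives a value with at most one preimage, and by surjectivity
exactly one, say `a`. The row and column through `a` contain only `k₀ + k₁ - 1 < N` points, so
some value `i` is attained nowhere on them.
-/

open Finset Fintype

variable {α β : Type*}

lemma card_filter_fst_eq_or_snd_eq [Fintype α] [Fintype β] [DecidableEq α] [DecidableEq β]
    (a : α × β) : #{b : α × β | b.1 = a.1 ∨ b.2 = a.2} = card α + card β - 1 := by
  have hrow : #{b : α × β | b.1 = a.1} = card β := by
    rw [show ({b : α × β | b.1 = a.1} : Finset _) = {a.1} ×ˢ univ by ext ⟨x, y⟩; simp [eq_comm]]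
    simp
  have hcol : #{b : α × β | b.2 = a.2} = card α := by
    rw [show ({b : α × β | b.2 = a.2} : Finset _) = univ ×ˢ {a.2} by ext ⟨x, y⟩; simp [eq_comm]]
    simp
  have hmeet : #{b : α × β | b.1 = a.1 ∧ b.2 = a.2} = 1 := by
    simp [← Prod.ext_iff, filter_eq']
  have := card_union_add_card_inter {b : α × β | b.1 = a.1} {b : α × β | b.2 = a.2}
  rw [← filter_or, ← filter_and, hrow, hcol, hmeet] at this
  omega

lemma exists_card_fiber_some_le_one [Fintype α] [Fintype β] [DecidableEq β]
    (ψ : α → Option β) (h : card α < 2 * card β) : ∃ i : β, #{x | ψ x = some i} ≤ 1 := by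
  obtain ⟨y, hy, hfiber⟩ := exists_card_fiber_lt_of_card_lt_mul
    (s := univ) (t := univ.map .some) (f := ψ) (n := 2) (by simpa [mul_comm] using h)
  obtain ⟨i, -, rfl⟩ := mem_map.1 hy
  exact ⟨i, Nat.lt_succ_iff.1 hfiber⟩

lemma exists_isSome_and_fiber_subsingleton [Fintype α] [Fintype β] (ψ : α → Option β)
    (hsurj : ∀ i, ∃ a, ψ a = some i) (h : card α < 2 * card β) :
    ∃ a, (ψ a).isSome ∧ ∀ b, ψ b = ψ a → b = a := by
  classical
  obtain ⟨i, hi⟩ := exists_card_fiber_some_le_one ψ h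
  obtain ⟨a, ha⟩ := hsurj i
  refine ⟨a, by simp [ha], fun b hb => card_le_one.1 hi b ?_ a ?_⟩ <;> simp [ha, hb]

lemma exists_forall_mem_ne_some [Fintype β] (ψ : α → Option β) (s : Finset α)
    (h : #s < card β) : ∃ i : β, ∀ b ∈ s, ψ b ≠ some i := by
  classical
  obtain ⟨y, hy, hys⟩ := exists_mem_notMem_of_card_lt_card (s := s.image ψ) (t := univ.map .some)
    (by simpa using card_image_le.trans_lt h)
  obtain ⟨i, -, rfl⟩ := mem_map.1 hy
  exact ⟨i, fun b hb hbi => hys (mem_image.2 ⟨b, hb, hbi⟩)⟩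

theorem stmt10_general (k₀ k₁ N : ℕ)
    (hN1 : k₀ * k₁ < 2 * N) (hN2 : k₀ + k₁ - 1 < N)
    (ψ : Fin k₀ × Fin k₁ → Option (Fin N))
    (hsurj : ∀ i : Fin N, ∃ p, ψ p = some i) :
    ∃ (a : Fin k₀ × Fin k₁) (i : Fin N),
      (ψ a).isSome ∧
      (∀ b, ψ b = ψ a → b = a) ∧
      ψ a ≠ some i ∧
      ∀ b : Fin k₀ × Fin k₁, ψ b = some i → b.1 ≠ a.1 ∧ b.2 ≠ a.2 := by
  obtain ⟨a, ha, hfiber⟩ := exists_isSome_and_fiber_subsingleton ψ hsurj (by simpa using hN1)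
  obtain ⟨i, hi⟩ := exists_forall_mem_ne_some ψ {b | b.1 = a.1 ∨ b.2 = a.2}
    (by simpa [card_filter_fst_eq_or_snd_eq] using hN2)
  refine ⟨a, i, ha, hfiber, hi a (by simp), fun b hb => ?_⟩
  simpa [not_or] using mt (hi b) (not_not.2 hb)

/-- If 2N > k₀k₁ and N > k₀ + k₁ − 1, every surjective partial function
ψ : Fin k₀ × Fin k₁ → Fin N has a singleton fiber {a} and a value i ≠ ψ(a)
none of whose preimages shares a coordinate with a. -/
theorem stmt10 (k₀ k₁ N : ℕ) (hk₀ : 2 ≤ k₀) (hk₁ : 2 ≤ k₁)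
    (hN1 : k₀ * k₁ < 2 * N) (hN2 : k₀ + k₁ - 1 < N)
    (ψ : Fin k₀ × Fin k₁ → Option (Fin N))
    (hsurj : ∀ i : Fin N, ∃ p, ψ p = some i) :
    ∃ (a : Fin k₀ × Fin k₁) (i : Fin N),
      (ψ a).isSome ∧
      (∀ b, ψ b = ψ a → b = a) ∧
      ψ a ≠ some i ∧
      ∀ b : Fin k₀ × Fin k₁, ψ b = some i → b.1 ≠ a.1 ∧ b.2 ≠ a.2 :=
  stmt10_general k₀ k₁ N hN1 hN2 ψ hsurj
end

section
/- Let n ≥ 1, let k₀, …, k_n ≥ 2, let N satisfy 2·N > (max_{m ≤ n} k_m) + ∏_{m ≤ n} k_m, and let ψ be a surjective partial function from ∏_{m ≤ n} Fin k_m to Fin N. Then ψ has two singleton fibers {a} and {b} with ψ(a) ≠ ψ(b) such that the tuples a and b differ in at least two coordinates. -/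
/-- If 2N > max k_m + ∏ k_m, every surjective partial function
ψ : ∏_{m ≤ n} Fin k_m → Fin N has two singleton fibers with distinct values
whose witnessing tuples differ in at least two coordinates. -/
theorem stmt11 (n N : ℕ) (hn : 1 ≤ n) (k : Fin (n + 1) → ℕ) (hk : ∀ m, 2 ≤ k m)
    (hN : Finset.univ.sup k + ∏ m, k m < 2 * N)
    (ψ : (∀ m, Fin (k m)) → Option (Fin N))
    (hsurj : ∀ i : Fin N, ∃ a, ψ a = some i) :
    ∃ a b : ∀ m, Fin (k m),
      (ψ a).isSome ∧ (ψ b).isSome ∧ ψ a ≠ ψ b ∧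
      (∀ a', ψ a' = ψ a → a' = a) ∧ (∀ b', ψ b' = ψ b → b' = b) ∧
      ∃ m₁ m₂ : Fin (n + 1), m₁ ≠ m₂ ∧ a m₁ ≠ b m₁ ∧ a m₂ ≠ b m₂ := by
  classical
  set fib : Fin N → Finset (∀ m, Fin (k m)) :=
    fun i => Finset.univ.filter (fun a => ψ a = some i) with hfibdef
  have hfib_mem : ∀ i a, a ∈ fib i ↔ ψ a = some i := by
    intro i a; simp [hfibdef]
  have hfib_ne : ∀ i, 1 ≤ (fib i).card := by
    intro i
    obtain ⟨a, ha⟩ := hsurj i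
    exact Finset.card_pos.mpr ⟨a, (hfib_mem i a).mpr ha⟩
  set S : Finset (Fin N) := Finset.univ.filter (fun i => (fib i).card = 1) with hSdef
  have hS_mem : ∀ i, i ∈ S ↔ (fib i).card = 1 := by
    intro i; simp [hSdef]
  -- disjointness of fibers
  have hdisj : ∀ i ∈ (Finset.univ : Finset (Fin N)), ∀ j ∈ Finset.univ, i ≠ j →
      Disjoint (fib i) (fib j) := by
    intro i _ j _ hij
    refine Finset.disjoint_left.mpr ?_
    intro a hai haj
    rw [hfib_mem] at hai haj
    rw [hai] at haj
    exact hij (Option.some.inj haj)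
  -- total size bound
  have hsum : ∑ i, (fib i).card ≤ ∏ m, k m := by
    rw [← Finset.card_biUnion hdisj]
    calc (Finset.univ.biUnion fib).card ≤ (Finset.univ : Finset (∀ m, Fin (k m))).card :=
          Finset.card_le_card (Finset.subset_univ _)
      _ = ∏ m, k m := by simp [Finset.card_univ]
  -- 2N ≤ ∏ k + |S|
  have hcount : 2 * N ≤ (∏ m, k m) + S.card := by
    have h1 : ∀ i : Fin N, 2 ≤ (fib i).card + (if i ∈ S then 1 else 0) := by
      intro i
      by_cases hi : i ∈ S
      · rw [(hS_mem i).mp hi]; simp [hi]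
      · have := hfib_ne i
        have h2 : (fib i).card ≠ 1 := fun h => hi ((hS_mem i).mpr h)
        simp [hi]; omega
    have h2 : ∑ i : Fin N, 2 ≤ ∑ i : Fin N, ((fib i).card + (if i ∈ S then 1 else 0)) :=
      Finset.sum_le_sum (fun i _ => h1 i)
    rw [Finset.sum_add_distrib] at h2
    have h3 : ∑ i : Fin N, (if i ∈ S then 1 else 0) = S.card := by
      rw [Finset.sum_ite_mem]
      simp [Finset.univ_inter]
    rw [h3] at h2
    simp only [Finset.sum_const, Finset.card_univ, Fintype.card_fin, smul_eq_mul] at h2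
    omega
  have hsup : Finset.univ.sup k < S.card := by omega
  have hsup0 : k 0 ≤ Finset.univ.sup k := Finset.le_sup (Finset.mem_univ 0)
  have hScard : 2 < S.card := by have := hk 0; omega
  -- choose witnesses
  have hW : ∀ i : Fin N, ∃ a, ψ a = some i ∧ (i ∈ S → ∀ a', ψ a' = some i → a' = a) := by
    intro i
    by_cases hi : i ∈ S
    · obtain ⟨a, ha⟩ := Finset.card_eq_one.mp ((hS_mem i).mp hi)
      refine ⟨a, ?_, ?_⟩
      · have : a ∈ fib i := ha ▸ Finset.mem_singleton_self a
        exact (hfib_mem i a).mp this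
      · intro _ a' ha'
        have : a' ∈ fib i := (hfib_mem i a').mpr ha'
        rw [ha, Finset.mem_singleton] at this
        exact this
    · obtain ⟨a, ha⟩ := hsurj i
      exact ⟨a, ha, fun h => absurd h hi⟩
  choose w hw1 hw2 using hW
  have hwne : ∀ i j : Fin N, i ≠ j → w i ≠ w j := by
    intro i j hij heq
    apply hij
    have : some i = some j := by rw [← hw1 i, ← hw1 j, heq]
    exact Option.some.inj this
  -- contradiction setup
  by_contra hcon
  push_neg at hcon
  have Hgood : ∀ i ∈ S, ∀ j ∈ S, i ≠ j → ∀ m₁ m₂ : Fin (n + 1), m₁ ≠ m₂ →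
      w i m₁ ≠ w j m₁ → w i m₂ = w j m₂ := by
    intro i hi j hj hij m₁ m₂ hm12 hd
    have hsome1 : (ψ (w i)).isSome := by rw [hw1]; rfl
    have hsome2 : (ψ (w j)).isSome := by rw [hw1]; rfl
    have hne : ψ (w i) ≠ ψ (w j) := by
      rw [hw1, hw1]; simp [hij]
    have hu1 : ∀ a', ψ a' = ψ (w i) → a' = w i := by
      intro a' ha'; exact hw2 i hi a' (by rw [← hw1 i]; exact ha')
    have hu2 : ∀ a', ψ a' = ψ (w j) → a' = w j := by
      intro a' ha'; exact hw2 j hj a' (by rw [← hw1 j]; exact ha')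
    exact hcon (w i) (w j) hsome1 hsome2 hne hu1 hu2 m₁ m₂ hm12 hd
  have onediff : ∀ i ∈ S, ∀ j ∈ S, i ≠ j →
      ∃ m, w i m ≠ w j m ∧ ∀ c ≠ m, w i c = w j c := by
    intro i hi j hj hij
    obtain ⟨m, hm⟩ := Function.ne_iff.mp (hwne i j hij)
    exact ⟨m, hm, fun c hc => Hgood i hi j hj hij m c (Ne.symm hc) hm⟩
  -- pick two elements of S
  obtain ⟨i₀, hi₀, j₀, hj₀, hij₀⟩ := Finset.one_lt_card.mp (by omega : 1 < S.card)
  obtain ⟨m, hm1, hm2⟩ := onediff i₀ hi₀ j₀ hj₀ hij₀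
  -- key: everyone agrees with w i₀ off coordinate m
  have key : ∀ i ∈ S, i ≠ i₀ → ∀ c ≠ m, w i₀ c = w i c := by
    intro i hi hne c hc
    by_cases hij0 : i = j₀
    · subst hij0; exact hm2 c hc
    obtain ⟨e, he1, he2⟩ := onediff i₀ hi₀ i hi (Ne.symm hne)
    by_cases hem : e = m
    · subst hem; exact he2 c hc
    · exfalso
      -- w j₀ and w i differ at m and at e
      have d1 : w j₀ m ≠ w i m := by
        rw [← he2 m (Ne.symm hem)]
        exact fun h => hm1 h.symm
      have d2 : w j₀ e = w i e := Hgood j₀ hj₀ i hi (fun h => hij0 h.symm) m e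
        (fun h => hem h.symm) d1
      rw [← hm2 e hem] at d2
      exact he1 d2
  -- injection S → Fin (k m)
  have hinj : Set.InjOn (fun i => w i m) (S : Set (Fin N)) := by
    intro i hi j hj hEq
    simp only at hEq
    by_contra hne
    have hww : w i = w j := by
      funext c
      by_cases hc : c = m
      · subst hc; exact hEq
      · by_cases hii : i = i₀
        · subst hii; exact key j hj (fun h => hne h.symm) c hc
        · by_cases hjj : j = i₀
          · subst hjj; exact (key i hi hii c hc).symm
          · rw [← key i hi hii c hc, key j hj hjj c hc]
    exact hwne i j hne hww
  have hcard : S.card ≤ k m := by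
    have := Finset.card_le_card_of_injOn (fun i => w i m)
      (fun i _ => Finset.mem_univ (w i m)) hinj
    simpa using this
  have : k m ≤ Finset.univ.sup k := Finset.le_sup (Finset.mem_univ m)
  omega
end

section
/- Let n ≥ 1, let k₀, …, k_n ≥ 2, let N satisfy 2·N > 2 + ∏_{m ≤ n} k_m and 3·N > 3·((max_{m ≤ n} k_m) − 1) + ∏_{m ≤ n} k_m, and let ψ be a surjective partial function from ∏_{m ≤ n} Fin k_m to Fin N. Then there exists a nonempty proper subset S of Fin N such that for every set X of tuples contained in the domain of ψ whose image under ψ is exactly S, X covers some tuple b in the domain of ψ with ψ(b) ∉ S. -/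
open Finset

private lemma pow_two_le {c : ℕ} (h : 2 ≤ c) : (4:ℕ) ≤ 2 ^ c := by
  calc (4:ℕ) = 2 ^ 2 := by norm_num
  _ ≤ 2 ^ c := Nat.pow_le_pow_right (by norm_num) h

/-- Base case: two factors. -/
private lemma master_base (a b : ℕ) (ha : 2 ≤ a) (hb : 2 ≤ b) :
    (2 ^ a - 1) * (2 ^ b - 1) ≤ 2 ^ (a * b / 2 + 2) - 3 := by
  rcases eq_or_lt_of_le ha with h2 | ha3
  · -- a = 2
    subst h2
    have hab : 2 * b / 2 = b := by omega
    rw [hab]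
    have hB : (4:ℕ) ≤ 2 ^ b := pow_two_le hb
    have hb2 : (2:ℕ) ^ (b + 2) = 4 * 2 ^ b := by rw [pow_add]; ring
    rw [hb2]
    norm_num
    omega
  · rcases eq_or_lt_of_le hb with h2 | hb3
    · -- b = 2
      subst h2
      have hab : a * 2 / 2 = a := by omega
      rw [hab]
      have hA : (4:ℕ) ≤ 2 ^ a := pow_two_le ha
      have ha2 : (2:ℕ) ^ (a + 2) = 4 * 2 ^ a := by rw [pow_add]; ring
      rw [ha2]
      norm_num
      omega
    · -- a ≥ 3, b ≥ 3
      have ha' : 3 ≤ a := ha3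
      have hb' : 3 ≤ b := hb3
      have hA : (8:ℕ) ≤ 2 ^ a := by
        calc (8:ℕ) = 2 ^ 3 := by norm_num
        _ ≤ 2 ^ a := Nat.pow_le_pow_right (by norm_num) ha'
      have hB : (8:ℕ) ≤ 2 ^ b := by
        calc (8:ℕ) = 2 ^ 3 := by norm_num
        _ ≤ 2 ^ b := Nat.pow_le_pow_right (by norm_num) hb'
      have hexp : a + b ≤ a * b / 2 + 2 := by
        have h1 : 2 * (a + b) ≤ a * b + 4 := by nlinarith
        omega
      have hpow : (2:ℕ) ^ (a + b) ≤ 2 ^ (a * b / 2 + 2) :=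
        Nat.pow_le_pow_right (by norm_num) hexp
      have hmul : (2:ℕ) ^ a * 2 ^ b = 2 ^ (a + b) := (pow_add 2 a b).symm
      have key : (2 ^ a - 1) * (2 ^ b - 1) + 2 ^ a + 2 ^ b = 2 ^ a * 2 ^ b + 1 := by
        obtain ⟨A, hAe⟩ := Nat.exists_eq_add_of_le (show 1 ≤ 2 ^ a by omega)
        obtain ⟨B, hBe⟩ := Nat.exists_eq_add_of_le (show 1 ≤ 2 ^ b by omega)
        have e1 : 1 + A - 1 = A := by omega
        have e2 : 1 + B - 1 = B := by omega
        rw [hAe, hBe, e1, e2]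
        ring
      omega

/-- products of numbers ≥ 2 are ≥ 2^(number of factors) -/
private lemma prod_ge_pow {n : ℕ} (k : Fin n → ℕ) (hk : ∀ m, 2 ≤ k m) :
    2 ^ n ≤ ∏ m, k m := by
  calc (2:ℕ) ^ n = ∏ _m : Fin n, 2 := by
        rw [Finset.prod_const, Finset.card_univ, Fintype.card_fin]
  _ ≤ ∏ m, k m := Finset.prod_le_prod (fun _ _ => by norm_num) (fun m _ => hk m)

/-- Master arithmetic lemma: ∏ (2^{k m} - 1) ≤ 2^(T/2 + 2) - 3 when there are at
least two factors, all ≥ 2. -/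
private lemma master_arith : ∀ (n : ℕ), 1 ≤ n → ∀ (k : Fin (n + 1) → ℕ),
    (∀ m, 2 ≤ k m) → ∏ m, (2 ^ (k m) - 1) ≤ 2 ^ ((∏ m, k m) / 2 + 2) - 3 := by
  intro n
  induction n with
  | zero => intro h; omega
  | succ n ih =>
    intro _ k hk
    rcases Nat.eq_zero_or_pos n with hn0 | hnpos
    · -- n = 0 : two coordinates
      subst hn0
      rw [Fin.prod_univ_two (f := fun m => 2 ^ (k m) - 1), Fin.prod_univ_two (f := k)]
      exact master_base (k 0) (k 1) (hk 0) (hk 1)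
    · -- n ≥ 1: peel the last coordinate
      rw [Fin.prod_univ_castSucc (f := fun m => 2 ^ (k m) - 1),
        Fin.prod_univ_castSucc (f := k)]
      set T : ℕ := ∏ m : Fin (n+1), k m.castSucc with hT
      set a : ℕ := k (Fin.last (n+1)) with haa
      have hIH : ∏ m : Fin (n+1), (2 ^ (k m.castSucc) - 1) ≤ 2 ^ (T / 2 + 2) - 3 :=
        ih hnpos (fun m => k m.castSucc) (fun m => hk m.castSucc)
      have hT4 : 4 ≤ T := by
        have hp : 2 ^ (n+1) ≤ T := by
          have := prod_ge_pow (fun m : Fin (n+1) => k m.castSucc) (fun m => hk m.castSucc)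
          simpa using this
        have h4 : (4:ℕ) ≤ 2 ^ (n+1) := pow_two_le (by omega)
        omega
      have ha2 : 2 ≤ a := hk _
      set t : ℕ := T / 2 with ht
      have ht2 : 2 ≤ t := by omega
      have hM : (16:ℕ) ≤ 2 ^ (t + 2) := by
        calc (16:ℕ) = 2 ^ 4 := by norm_num
        _ ≤ 2 ^ (t + 2) := Nat.pow_le_pow_right (by norm_num) (by omega)
      have hE : (4:ℕ) ≤ 2 ^ a := pow_two_le ha2
      have step1 : (∏ m : Fin (n+1), (2 ^ (k m.castSucc) - 1)) * (2 ^ a - 1)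
          ≤ (2 ^ (t + 2) - 3) * (2 ^ a - 1) :=
        Nat.mul_le_mul_right _ hIH
      have step2 : (2 ^ (t + 2) - 3) * (2 ^ a - 1) ≤ 2 ^ (t + 2 + a) - 3 := by
        have hME : (2:ℕ) ^ (t + 2) * 2 ^ a = 2 ^ (t + 2 + a) := (pow_add 2 _ _).symm
        have expand : (2 ^ (t+2) - 3) * (2 ^ a - 1) + 3 * 2 ^ a + 2 ^ (t + 2)
            = 2 ^ (t+2) * 2 ^ a + 3 := by
          obtain ⟨M, hMe⟩ := Nat.exists_eq_add_of_le hM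
          obtain ⟨E, hEe⟩ := Nat.exists_eq_add_of_le hE
          have e1 : 16 + M - 3 = 13 + M := by omega
          have e2 : 4 + E - 1 = 3 + E := by omega
          rw [hMe, hEe, e1, e2]
          ring
        omega
      have hexp2 : t + 2 + a ≤ T * a / 2 + 2 := by
        have h1 : t * a ≤ T * a / 2 := by
          rw [Nat.le_div_iff_mul_le (by norm_num)]
          have h2t : 2 * t ≤ T := by omega
          nlinarith
        have h2 : t + a ≤ t * a := by nlinarith
        omega
      have step3 : (2:ℕ) ^ (t + 2 + a) - 3 ≤ 2 ^ (T * a / 2 + 2) - 3 := by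
        have := Nat.pow_le_pow_right (show 1 ≤ 2 by norm_num) hexp2
        omega
      omega

/-- The combinatorial property (∗): if 2N > 2 + ∏ k_m and
3N > 3(max k_m − 1) + ∏ k_m, then for every surjective partial function
ψ : ∏_{m ≤ n} Fin k_m → Fin N there is a nonempty proper S ⊆ Fin N such that
every set of tuples in the domain with image exactly S covers a tuple in the
domain mapping outside S. -/
theorem stmt12 (n N : ℕ) (hn : 1 ≤ n) (k : Fin (n + 1) → ℕ) (hk : ∀ m, 2 ≤ k m)
    (hN1 : 2 + ∏ m, k m < 2 * N)
    (hN2 : 3 * (Finset.univ.sup k - 1) + ∏ m, k m < 3 * N)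
    (ψ : (∀ m, Fin (k m)) → Option (Fin N))
    (hsurj : ∀ i : Fin N, ∃ a, ψ a = some i) :
    ∃ S : Set (Fin N), S.Nonempty ∧ S ≠ Set.univ ∧
      ∀ X : Set (∀ m, Fin (k m)),
        (∀ a ∈ X, ∃ i ∈ S, ψ a = some i) →
        (∀ i ∈ S, ∃ a ∈ X, ψ a = some i) →
        ∃ b : ∀ m, Fin (k m), (ψ b).isSome ∧ (∀ j, ψ b = some j → j ∉ S) ∧
          ∀ m, ∃ a ∈ X, a m = b m := by
  classical
  -- basic facts
  have hT4 : 4 ≤ ∏ m, k m := by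
    have hp := prod_ge_pow k hk
    have h4 : (4:ℕ) ≤ 2 ^ (n+1) := pow_two_le (by omega)
    omega
  have hN4 : 4 ≤ N := by omega
  haveI : Nonempty (Fin N) := ⟨⟨0, by omega⟩⟩
  -- the image of a box
  let img : (∀ m, Finset (Fin (k m))) → Set (Fin N) := fun P =>
    {i | ∃ a, (∀ m, a m ∈ P m) ∧ ψ a = some i}
  -- Step 1: there is a nonempty proper S which is not the image of any box.
  have hex : ∃ S : Set (Fin N), S.Nonempty ∧ S ≠ Set.univ ∧ ∀ P, img P ≠ S := by
    by_contra hcon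
    push_neg at hcon
    -- hcon : ∀ S, S.Nonempty → S ≠ univ → ∃ P, img P = S
    have hreal : ∀ s : {s : Finset (Fin N) // s.Nonempty ∧ s ≠ Finset.univ},
        ∃ P : ∀ m, Finset (Fin (k m)), img P = ↑(s : Finset (Fin N)) := by
      rintro ⟨s, hs1, hs2⟩
      refine hcon (↑s) (Finset.coe_nonempty.mpr hs1) ?_
      intro h
      apply hs2
      apply Finset.coe_injective
      rw [h, Finset.coe_univ]
    let Pbox : {s : Finset (Fin N) // s.Nonempty ∧ s ≠ Finset.univ} →
        (∀ m, Finset (Fin (k m))) := fun s => (hreal s).choose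
    have hPbox : ∀ s, img (Pbox s) = ↑(s : Finset (Fin N)) := fun s => (hreal s).choose_spec
    have hPne : ∀ s m, (Pbox s m).Nonempty := by
      rintro s m
      obtain ⟨i, hi⟩ := s.2.1
      have hmem : (i : Fin N) ∈ img (Pbox s) := by
        rw [hPbox s]
        exact_mod_cast hi
      obtain ⟨a, ha, -⟩ := hmem
      exact ⟨a m, ha m⟩
    let F : {s : Finset (Fin N) // s.Nonempty ∧ s ≠ Finset.univ} →
        (∀ m, {P : Finset (Fin (k m)) // P.Nonempty}) :=
      fun s m => ⟨Pbox s m, hPne s m⟩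
    have hFinj : Function.Injective F := by
      intro s t hst
      have hP : Pbox s = Pbox t := by
        funext m
        exact congrArg Subtype.val (congrFun hst m)
      have hcoe : (↑(s : Finset (Fin N)) : Set (Fin N)) = ↑(t : Finset (Fin N)) := by
        rw [← hPbox s, ← hPbox t, hP]
      exact Subtype.ext (Finset.coe_injective hcoe)
    have hcard := Fintype.card_le_of_injective F hFinj
    -- compute the cardinalities
    have hcard1 : Fintype.card {s : Finset (Fin N) // s.Nonempty ∧ s ≠ Finset.univ}
        = 2 ^ N - 2 := by
      rw [Fintype.card_subtype]
      have hset : Finset.univ.filter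
            (fun s : Finset (Fin N) => s.Nonempty ∧ s ≠ Finset.univ)
          = Finset.univ \ {∅, Finset.univ} := by
        ext s
        simp only [Finset.mem_filter, Finset.mem_univ, true_and, Finset.mem_sdiff,
          Finset.mem_insert, Finset.mem_singleton, Finset.nonempty_iff_ne_empty]
        tauto
      rw [hset, Finset.card_sdiff_of_subset (by intro x _; exact Finset.mem_univ x)]
      have h2 : ({∅, Finset.univ} : Finset (Finset (Fin N))).card = 2 := by
        rw [Finset.card_insert_of_notMem, Finset.card_singleton]
        simp only [Finset.mem_singleton]
        intro h
        have hne : (Finset.univ : Finset (Fin N)).Nonempty := Finset.univ_nonempty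
        rw [← h] at hne
        exact Finset.not_nonempty_empty hne
      rw [h2, Finset.card_univ, Fintype.card_finset, Fintype.card_fin]
    have hcard2 : Fintype.card (∀ m, {P : Finset (Fin (k m)) // P.Nonempty})
        = ∏ m, (2 ^ (k m) - 1) := by
      rw [Fintype.card_pi]
      apply Finset.prod_congr rfl
      intro m _
      rw [Fintype.card_subtype]
      have hset : Finset.univ.filter (fun P : Finset (Fin (k m)) => P.Nonempty)
          = Finset.univ \ {∅} := by
        ext P
        simp [Finset.nonempty_iff_ne_empty]
      rw [hset, Finset.card_sdiff_of_subset (by intro x _; exact Finset.mem_univ x)]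
      rw [Finset.card_singleton, Finset.card_univ, Fintype.card_finset, Fintype.card_fin]
    rw [hcard1, hcard2] at hcard
    -- arithmetic contradiction
    have harith := master_arith n hn k hk
    have hdiv : (∏ m, k m) / 2 + 2 ≤ N := by omega
    have hpow : (2:ℕ) ^ ((∏ m, k m) / 2 + 2) ≤ 2 ^ N :=
      Nat.pow_le_pow_right (by norm_num) hdiv
    have h2N : (16:ℕ) ≤ 2 ^ N := by
      calc (16:ℕ) = 2 ^ 4 := by norm_num
      _ ≤ 2 ^ N := Nat.pow_le_pow_right (by norm_num) hN4
    omega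
  -- Step 2: such an S has the required property.
  obtain ⟨S, hS1, hS2, hS3⟩ := hex
  refine ⟨S, hS1, hS2, ?_⟩
  intro X h1 h2
  set P : ∀ m, Finset (Fin (k m)) := fun m =>
    Finset.univ.filter (fun v => ∃ a ∈ X, a m = v) with hP
  have hsub : S ⊆ img P := by
    intro i hi
    obtain ⟨a, haX, hai⟩ := h2 i hi
    exact ⟨a, fun m => Finset.mem_filter.mpr ⟨Finset.mem_univ _, ⟨a, haX, rfl⟩⟩, hai⟩
  have hne := hS3 P
  have hbig : ∃ i ∈ img P, i ∉ S := by
    by_contra hno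
    push_neg at hno
    exact hne (Set.Subset.antisymm (fun i hi => hno i hi) hsub)
  obtain ⟨i, ⟨b, hbP, hbi⟩, hiS⟩ := hbig
  refine ⟨b, ?_, ?_, ?_⟩
  · rw [hbi]; rfl
  · intro j hj
    rw [hbi] at hj
    have hij : i = j := Option.some.inj hj
    rwa [← hij]
  · intro m
    have hm := Finset.mem_filter.mp (hbP m)
    obtain ⟨a, haX, ham⟩ := hm.2
    exact ⟨a, haX, ham⟩
end

section
/- Let k ≥ 2, let i_c < k and i_d < 2. Let c : ℕ → ℕ → Fin k be a stable coloring of pairs with no infinite homogeneous set of color i_c, and let d : ℕ → ℕ → Fin 2 be a stable coloring of pairs with no infinite homogeneous set of color i_d. Define e : ℕ → ℕ → Fin k by e x y = i_c if c x y = i_c or d x y = i_d, and e x y = c x y otherwise. Then: (a) e is stable; (b) e has no infinite homogeneous set of color i_c; and (c) every infinite set that is homogeneous for e is homogeneous for c and homogeneous for d. -/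
open Filter

/-- If every element of an infinite set `S` eventually takes color `i`,
then there is an infinite homogeneous subset of color `i`. -/
lemma exists_homog_aux {k : ℕ} (c : ℕ → ℕ → Fin k) (i : Fin k) (S : Set ℕ)
    (hS : S.Infinite) (h : ∀ x ∈ S, ∀ᶠ y in atTop, c x y = i) :
    ∃ H : Set ℕ, H.Infinite ∧ ∀ x ∈ H, ∀ y ∈ H, x < y → c x y = i := by
  have hN : ∀ x, ∃ N, x ∈ S → ∀ y ≥ N, c x y = i := by
    intro x
    by_cases hx : x ∈ S
    · obtain ⟨N, hN⟩ := eventually_atTop.mp (h x hx)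
      exact ⟨N, fun _ => hN⟩
    · exact ⟨0, fun hx' => absurd hx' hx⟩
  choose N hNspec using hN
  set B : ℕ → ℕ := fun x => (Finset.range (x + 1)).sup N with hB
  have hBN : ∀ x, N x ≤ B x := fun x =>
    Finset.le_sup (Finset.mem_range.mpr (by omega))
  have hgex : ∀ n : ℕ, ∃ m ∈ S, n < m := fun n => hS.exists_gt n
  choose g hg hg' using hgex
  set f : ℕ → ℕ := fun n => Nat.rec (g 0) (fun _ p => g (max p (B p))) n with hf
  have hfS : ∀ n, f n ∈ S := by intro n; cases n <;> exact hg _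
  have hstep : ∀ n, f n < f (n + 1) ∧ B (f n) < f (n + 1) := by
    intro n
    constructor
    · exact lt_of_le_of_lt (le_max_left _ _) (hg' _)
    · exact lt_of_le_of_lt (le_max_right _ _) (hg' _)
  have hmono : StrictMono f := strictMono_nat_of_lt_succ fun n => (hstep n).1
  refine ⟨Set.range f, Set.infinite_range_of_injective hmono.injective, ?_⟩
  rintro _ ⟨m, rfl⟩ _ ⟨n, rfl⟩ hlt
  have hmn : m < n := hmono.lt_iff_lt.mp hlt
  have h1 : N (f m) ≤ B (f m) := hBN _
  have h2 : B (f m) < f (m + 1) := (hstep m).2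
  have h3 : f (m + 1) ≤ f n := hmono.monotone hmn
  exact hNspec (f m) (hfS m) (f n) (by omega)

/-- Combining a thin-unbalanced stable k-coloring c (avoiding color i_c on
homogeneous sets) with a thin-unbalanced stable 2-coloring d (avoiding i_d):
the merged coloring e is stable, thin-unbalanced with witness i_c, and every
infinite homogeneous set for e is homogeneous for both c and d. -/
theorem stmt13 (k : ℕ) (hk : 2 ≤ k) (i_c : Fin k) (i_d : Fin 2)
    (c : ℕ → ℕ → Fin k) (d : ℕ → ℕ → Fin 2)
    (hcstable : ∀ x, ∃ i, ∀ᶠ y in Filter.atTop, c x y = i)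
    (hdstable : ∀ x, ∃ i, ∀ᶠ y in Filter.atTop, d x y = i)
    (hch : ¬ ∃ H : Set ℕ, H.Infinite ∧ ∀ x ∈ H, ∀ y ∈ H, x < y → c x y = i_c)
    (hdh : ¬ ∃ H : Set ℕ, H.Infinite ∧ ∀ x ∈ H, ∀ y ∈ H, x < y → d x y = i_d)
    (e : ℕ → ℕ → Fin k)
    (he : ∀ x y, e x y = if c x y = i_c ∨ d x y = i_d then i_c else c x y) :
    (∀ x, ∃ i, ∀ᶠ y in Filter.atTop, e x y = i) ∧
    (¬ ∃ H : Set ℕ, H.Infinite ∧ ∀ x ∈ H, ∀ y ∈ H, x < y → e x y = i_c) ∧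
    (∀ H : Set ℕ, H.Infinite →
      (∃ i, ∀ x ∈ H, ∀ y ∈ H, x < y → e x y = i) →
      (∃ i, ∀ x ∈ H, ∀ y ∈ H, x < y → c x y = i) ∧
      (∃ j, ∀ x ∈ H, ∀ y ∈ H, x < y → d x y = j)) := by
  -- (b) first
  have partb : ¬ ∃ H : Set ℕ, H.Infinite ∧ ∀ x ∈ H, ∀ y ∈ H, x < y → e x y = i_c := by
    rintro ⟨H, hHinf, hH⟩
    have key : ∀ x ∈ H, (∀ᶠ y in atTop, c x y = i_c) ∨ (∀ᶠ y in atTop, d x y = i_d) := by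
      intro x hx
      obtain ⟨ic, hic⟩ := hcstable x
      obtain ⟨id', hid⟩ := hdstable x
      obtain ⟨Nc, hNc⟩ := eventually_atTop.mp hic
      obtain ⟨Nd, hNd⟩ := eventually_atTop.mp hid
      obtain ⟨y, hyH, hy⟩ := hHinf.exists_gt (max x (max Nc Nd))
      have hxy : x < y := lt_of_le_of_lt (le_max_left _ _) hy
      have hyc : c x y = ic := hNc y (by
        have := lt_of_le_of_lt (le_trans (le_max_left Nc Nd) (le_max_right x _)) hy
        omega)
      have hyd : d x y = id' := hNd y (by
        have := lt_of_le_of_lt (le_trans (le_max_right Nc Nd) (le_max_right x _)) hy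
        omega)
      have hey := hH x hx y hyH hxy
      rw [he] at hey
      by_cases hcond : c x y = i_c ∨ d x y = i_d
      · rcases hcond with h1 | h1
        · left
          rw [hyc] at h1
          exact hic.mono fun z hz => by rw [hz, h1]
        · right
          rw [hyd] at h1
          exact hid.mono fun z hz => by rw [hz, h1]
      · rw [if_neg hcond] at hey
        exact absurd (Or.inl hey) hcond
    set H1 : Set ℕ := {x ∈ H | ∀ᶠ y in atTop, c x y = i_c} with hH1
    set H2 : Set ℕ := {x ∈ H | ∀ᶠ y in atTop, d x y = i_d} with hH2
    have hsub : H ⊆ H1 ∪ H2 := by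
      intro x hx
      rcases key x hx with h | h
      · exact Or.inl ⟨hx, h⟩
      · exact Or.inr ⟨hx, h⟩
    rcases Set.infinite_union.mp (hHinf.mono hsub) with h1 | h2
    · exact hch (exists_homog_aux c i_c H1 h1 fun x hx => hx.2)
    · exact hdh (exists_homog_aux d i_d H2 h2 fun x hx => hx.2)
  refine ⟨?_, partb, ?_⟩
  · -- (a) stability
    intro x
    obtain ⟨ic, hic⟩ := hcstable x
    obtain ⟨id', hid⟩ := hdstable x
    refine ⟨if ic = i_c ∨ id' = i_d then i_c else ic, ?_⟩
    filter_upwards [hic, hid] with y hy1 hy2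
    rw [he, hy1, hy2]
  · -- (c)
    rintro H hHinf ⟨i, hiH⟩
    have hne : i ≠ i_c := by
      rintro rfl
      exact partb ⟨H, hHinf, hiH⟩
    have hfact : ∀ a b : Fin 2, a ≠ b → a = 1 - b := by decide
    have hpair : ∀ x ∈ H, ∀ y ∈ H, x < y → c x y = i ∧ d x y ≠ i_d := by
      intro x hx y hy hxy
      have hey := hiH x hx y hy hxy
      rw [he] at hey
      by_cases hcond : c x y = i_c ∨ d x y = i_d
      · rw [if_pos hcond] at hey
        exact absurd hey.symm hne
      · rw [if_neg hcond] at hey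
        push_neg at hcond
        exact ⟨hey, hcond.2⟩
    refine ⟨⟨i, fun x hx y hy hxy => (hpair x hx y hy hxy).1⟩,
      ⟨1 - i_d, fun x hx y hy hxy => hfact _ _ (hpair x hx y hy hxy).2⟩⟩
end

section
/- Let S : ℕ → Bool be monotone and define c : ℕ → ℕ → Fin 2 by c x y = 1 if S x = S y, and c x y = 0 otherwise. Then: (a) c is stable; (b) the set {x : lim_y c x y = 0} is finite (so every infinite limit-homogeneous set for c has color 1); and (c) for every infinite set L that is limit-homogeneous for c, S takes the value true somewhere if and only if S x = true for some x ≤ min L. -/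
/-- The LPO ≤_W wub-D²₂ construction: for monotone S, the coloring
c x y = 1 iff S x = S y is stable, almost all limits are 1, and any infinite
limit-homogeneous set L detects whether S ever takes the value true by
inspecting S up to min L. -/
theorem stmt14 (S : ℕ → Bool) (hS : Monotone S)
    (c : ℕ → ℕ → Fin 2)
    (hc : ∀ x y, c x y = if S x = S y then 1 else 0) :
    (∀ x, ∃ i, ∀ᶠ y in Filter.atTop, c x y = i) ∧
    {x | ∀ᶠ y in Filter.atTop, c x y = 0}.Finite ∧
    ∀ L : Set ℕ, L.Infinite →
      (∃ i, ∀ x ∈ L, ∀ᶠ y in Filter.atTop, c x y = i) →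
      ((∃ x, S x = true) ↔ ∃ x ≤ sInf L, S x = true) := by
  have key : ∀ n, S n = true → ∀ y, n ≤ y → S y = true := by
    intro n hn y hy
    have := hS hy
    rw [hn] at this
    exact le_antisymm (Bool.le_true _) this
  by_cases h : ∃ n, S n = true
  · obtain ⟨n, hn⟩ := h
    refine ⟨?_, ?_, ?_⟩
    · intro x
      refine ⟨if S x then 1 else 0, Filter.eventually_atTop.2 ⟨n, fun y hy => ?_⟩⟩
      rw [hc, key n hn y hy]
    · apply Set.Finite.subset (Set.finite_Iio n)
      intro x hx
      by_contra hxn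
      have hxn' : n ≤ x := le_of_not_gt hxn
      have hxt : S x = true := key n hn x hxn'
      obtain ⟨y, hy0, hym⟩ := (hx.and (Filter.eventually_ge_atTop n)).exists
      rw [hc, hxt, key n hn y hym] at hy0
      simp at hy0
    · intro L hL hhom
      constructor
      · rintro ⟨m, hm⟩
        have hne : L.Nonempty := hL.nonempty
        have hInf : sInf L ∈ L := Nat.sInf_mem hne
        refine ⟨sInf L, le_refl _, ?_⟩
        obtain ⟨i, hi⟩ := hhom
        obtain ⟨z, hzL, hzm⟩ := hL.exists_gt m
        have hz : S z = true := key m hm z hzm.le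
        have h1 : i = 1 := by
          obtain ⟨y, hy0, hym⟩ := ((hi z hzL).and (Filter.eventually_ge_atTop m)).exists
          rw [hc, hz, key m hm y hym] at hy0
          simpa using hy0.symm
        by_contra hfalse
        have hf : S (sInf L) = false := by
          cases hq : S (sInf L)
          · rfl
          · exact absurd hq hfalse
        obtain ⟨y, hy0, hym⟩ := ((hi _ hInf).and (Filter.eventually_ge_atTop m)).exists
        rw [hc, hf, key m hm y hym, h1] at hy0
        simp at hy0
      · rintro ⟨x, _, hx⟩; exact ⟨x, hx⟩
  · have hall : ∀ x, S x = false := by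
      intro x
      cases hq : S x
      · rfl
      · exact absurd ⟨x, hq⟩ h
    refine ⟨fun x => ⟨1, Filter.Eventually.of_forall fun y => by
        rw [hc, hall x, hall y]; simp⟩, ?_, ?_⟩
    · apply Set.Finite.subset Set.finite_empty
      intro x hx
      obtain ⟨y, hy⟩ := hx.exists
      rw [hc, hall x, hall y] at hy
      simp at hy
    · intro L _ _
      constructor
      · rintro ⟨x, hx⟩; exact absurd hx (by simp [hall x])
      · rintro ⟨x, _, hx⟩; exact ⟨x, hx⟩
end

section
/- Let c : ℕ → ℕ → Fin 2 be a stable coloring of pairs, let i < 2, and let ℓ : ℕ → Fin 2 satisfy ℓ y = i for all sufficiently large y. Assume the set {x : lim_y c x y = i} is finite. Define d : ℕ → ℕ → Fin 2 by d x y = 1 if c x y = 1 − ℓ y, and d x y = 0 otherwise. Then d is stable, the set {x : lim_y d x y = 0} is finite, and every infinite set that is limit-homogeneous for d is limit-homogeneous for c. (This is the reduction of the 'Δ⁰₂-witnessed thin-unbalanced' version of D²₂ to the cofinite-to-infinite principle CFI_{Δ⁰₂}.) -/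
/-- Reduction of the Δ⁰₂-witnessed thin-unbalanced version of D²₂ to
CFI_{Δ⁰₂}: given stable c with eventually-witnessed thin-unbalancing color i,
the coloring d x y = 1 iff c x y = 1 − ℓ y is stable, has only finitely many
x with limit 0, and infinite limit-homogeneous sets for d are
limit-homogeneous for c. -/
theorem stmt15 (c : ℕ → ℕ → Fin 2) (i : Fin 2) (ℓ : ℕ → Fin 2)
    (hcstable : ∀ x, ∃ j, ∀ᶠ y in Filter.atTop, c x y = j)
    (hℓ : ∀ᶠ y in Filter.atTop, ℓ y = i)
    (hfin : {x | ∀ᶠ y in Filter.atTop, c x y = i}.Finite)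
    (d : ℕ → ℕ → Fin 2)
    (hd : ∀ x y, d x y = if c x y = 1 - ℓ y then 1 else 0) :
    (∀ x, ∃ j, ∀ᶠ y in Filter.atTop, d x y = j) ∧
    {x | ∀ᶠ y in Filter.atTop, d x y = 0}.Finite ∧
    ∀ L : Set ℕ, L.Infinite →
      (∃ j, ∀ x ∈ L, ∀ᶠ y in Filter.atTop, d x y = j) →
      ∃ j, ∀ x ∈ L, ∀ᶠ y in Filter.atTop, c x y = j := by
  have key : ∀ x, ∃ j, (∀ᶠ y in Filter.atTop, c x y = j) ∧
      (∀ᶠ y in Filter.atTop, d x y = if j = 1 - i then 1 else 0) := by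
    intro x
    obtain ⟨j, hj⟩ := hcstable x
    refine ⟨j, hj, ?_⟩
    filter_upwards [hj, hℓ] with y hy hy2
    rw [hd, hy, hy2]
  have hsub : {x | ∀ᶠ y in Filter.atTop, d x y = 0} ⊆
      {x | ∀ᶠ y in Filter.atTop, c x y = i} := by
    intro x hx
    obtain ⟨j, hj, hdj⟩ := key x
    obtain ⟨y, hy1, hy2⟩ := (hx.and hdj).exists
    have h0 : (if j = 1 - i then (1 : Fin 2) else 0) = 0 := by rw [← hy2, hy1]
    have : j = i := by
      fin_cases j <;> fin_cases i <;> simp_all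
    exact this ▸ hj
  refine ⟨fun x => ⟨_, (key x).choose_spec.2⟩, hfin.subset hsub, ?_⟩
  rintro L hL ⟨j, hjL⟩
  fin_cases j
  · exact (hL (hfin.subset fun x hx => hsub (hjL x hx))).elim
  · refine ⟨1 - i, fun x hx => ?_⟩
    filter_upwards [hjL x hx, hℓ] with y hy hy2
    rw [hd] at hy
    rw [hy2] at hy
    by_contra h
    simp [h] at hy
end

section
/- Let S : ℕ → Bool be monotone. Define c : ℕ → ℕ → Fin 2 by c x y = par(x) if S z = false for all z < y, and c x y = 1 − par(x) otherwise, where par(x) = x mod 2. Then: (a) c is stable; (b) both sets {x : lim_y c x y = 0} and {x : lim_y c x y = 1} are infinite (so c is a balanced stable coloring); (c) any two elements of an infinite homogeneous set for c have the same parity; and (d) if H is an infinite homogeneous set for c with least two elements x₀ < x₁, then S is identically false if and only if c x₀ x₁ = par(x₀). (This construction witnesses LPO ≤_W SRT²₂ restricted to balanced colorings.) -/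
/-!
Write `A` for "S is identically false". Then `c x y = x + d y` in `Fin 2`, where the bit
`d y` records whether `S` has already become true below `y`; it is eventually the constant
`e = [¬A]`, so `lim_y c x y = x + e`. Every element `x` of an infinite homogeneous set of
color `i` meets a later element `y` with `c x y = lim_y c x y`, hence `x + e = i`: all
elements share the parity `i - e`, and the color `c x₀ x₁ = i` equals `x₀` exactly when
`e = 0`, i.e. when `A` holds.
-/

open Filter Fin.NatCast

lemma eventually_forall_lt_iff_forall (P : ℕ → Prop) :
    ∀ᶠ y in atTop, (∀ z < y, P z) ↔ ∀ z, P z := by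
  by_cases h : ∀ z, P z
  · exact Eventually.of_forall fun _ => iff_of_true (fun z _ => h z) h
  · obtain ⟨n, hn⟩ := not_forall.1 h
    filter_upwards [eventually_gt_atTop n] with y hy
    exact iff_of_false (fun hlt => hn (hlt n hy)) h

lemma limit_eq_of_mem_homogeneous {α : Type*} {c : ℕ → ℕ → α} {ℓ : ℕ → α}
    (hℓ : ∀ x, ∀ᶠ y in atTop, c x y = ℓ x) {H : Set ℕ} (hH : H.Infinite) {i : α}
    (hi : ∀ x ∈ H, ∀ y ∈ H, x < y → c x y = i) {x : ℕ} (hx : x ∈ H) : ℓ x = i := by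
  obtain ⟨y, ⟨hy, hxy⟩, hyH⟩ :=
    (((hℓ x).and (eventually_gt_atTop x)).and_frequently
      (Nat.frequently_atTop_iff_infinite.2 hH)).exists
  exact hy ▸ hi x hx y hyH hxy

lemma Fin.infinite_setOf_natCast_eq {n : ℕ} [NeZero n] (j : Fin n) :
    {x : ℕ | (x : Fin n) = j}.Infinite := by
  refine Set.infinite_of_forall_exists_gt fun N => ⟨j + n * (N + 1), Fin.ext ?_, ?_⟩
  · rw [Fin.val_natCast, Nat.add_mul_mod_self_left, Nat.mod_eq_of_lt j.isLt]
  · have := NeZero.pos n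
    nlinarith

lemma Fin.one_sub_eq_add_one (a : Fin 2) : 1 - a = a + 1 := by
  revert a
  decide

lemma Fin.two_natCast_eq_natCast_iff {x y : ℕ} : (x : Fin 2) = y ↔ x % 2 = y % 2 :=
  CharP.cast_eq_iff_mod_eq (Fin 2) 2

open Classical in
lemma eventually_eq_add_of_forall_eq_ite (S : ℕ → Bool) (c : ℕ → ℕ → Fin 2)
    (hc : ∀ x y, c x y =
      if ∀ z < y, S z = false then (x : Fin 2) else 1 - (x : Fin 2)) (x : ℕ) :
    ∀ᶠ y in atTop, c x y = x + if ∀ z, S z = false then 0 else 1 := by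
  filter_upwards [eventually_forall_lt_iff_forall (S · = false)] with y hy
  rw [hc, if_congr hy rfl rfl]
  split_ifs
  · exact (add_zero _).symm
  · exact Fin.one_sub_eq_add_one _

theorem stmt16_general (S : ℕ → Bool)
    (c : ℕ → ℕ → Fin 2)
    (hc : ∀ x y, c x y =
      if ∀ z < y, S z = false then (x : Fin 2) else 1 - (x : Fin 2)) :
    (∀ x, ∃ i, ∀ᶠ y in Filter.atTop, c x y = i) ∧
    {x | ∀ᶠ y in Filter.atTop, c x y = 0}.Infinite ∧
    {x | ∀ᶠ y in Filter.atTop, c x y = 1}.Infinite ∧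
    (∀ H : Set ℕ, H.Infinite →
      (∃ i, ∀ x ∈ H, ∀ y ∈ H, x < y → c x y = i) →
      ∀ x ∈ H, ∀ y ∈ H, x % 2 = y % 2) ∧
    (∀ H : Set ℕ, H.Infinite →
      (∃ i, ∀ x ∈ H, ∀ y ∈ H, x < y → c x y = i) →
      ∀ x₀ ∈ H, ∀ x₁ ∈ H,
        (∀ x ∈ H, x₀ ≤ x) → (∀ x ∈ H, x ≠ x₀ → x₁ ≤ x) → x₀ < x₁ →
        ((∀ x, S x = false) ↔ c x₀ x₁ = (x₀ : Fin 2))) := by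
  classical
  set e : Fin 2 := if ∀ z, S z = false then 0 else 1 with he
  have hlim : ∀ x, ∀ᶠ y in atTop, c x y = x + e := eventually_eq_add_of_forall_eq_ite S c hc
  have infinite_limit (j : Fin 2) : {x | ∀ᶠ y in atTop, c x y = j}.Infinite :=
    (Fin.infinite_setOf_natCast_eq (j - e)).mono fun x hx =>
      (hlim x).mono fun y hy => hy.trans (by rw [show (x : Fin 2) = j - e from hx, sub_add_cancel])
  refine ⟨fun x => ⟨_, hlim x⟩, infinite_limit 0, infinite_limit 1, ?_, ?_⟩
  · rintro H hH ⟨i, hi⟩ x hx y hy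
    have hxy : (x : Fin 2) + e = y + e :=
      (limit_eq_of_mem_homogeneous hlim hH hi hx).trans
        (limit_eq_of_mem_homogeneous hlim hH hi hy).symm
    exact Fin.two_natCast_eq_natCast_iff.1 (add_right_cancel hxy)
  · rintro H hH ⟨i, hi⟩ x₀ hx₀ x₁ hx₁ - - hlt
    rw [hi x₀ hx₀ x₁ hx₁ hlt, ← limit_eq_of_mem_homogeneous hlim hH hi hx₀, add_eq_left, he]
    split_ifs with h <;> simp [h]

open Fin.NatCast in
/-- The LPO ≤_W balanced-SRT²₂ construction: for monotone S, the coloring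
c x y = par x if S is false below y, else 1 − par x, is stable and balanced;
elements of an infinite homogeneous set share parity; and the color of the two
least elements of an infinite homogeneous set determines whether S is
identically false. -/
theorem stmt16 (S : ℕ → Bool) (hS : Monotone S)
    (c : ℕ → ℕ → Fin 2)
    (hc : ∀ x y, c x y =
      if ∀ z < y, S z = false then (x : Fin 2) else 1 - (x : Fin 2)) :
    (∀ x, ∃ i, ∀ᶠ y in Filter.atTop, c x y = i) ∧
    {x | ∀ᶠ y in Filter.atTop, c x y = 0}.Infinite ∧
    {x | ∀ᶠ y in Filter.atTop, c x y = 1}.Infinite ∧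
    (∀ H : Set ℕ, H.Infinite →
      (∃ i, ∀ x ∈ H, ∀ y ∈ H, x < y → c x y = i) →
      ∀ x ∈ H, ∀ y ∈ H, x % 2 = y % 2) ∧
    (∀ H : Set ℕ, H.Infinite →
      (∃ i, ∀ x ∈ H, ∀ y ∈ H, x < y → c x y = i) →
      ∀ x₀ ∈ H, ∀ x₁ ∈ H,
        (∀ x ∈ H, x₀ ≤ x) → (∀ x ∈ H, x ≠ x₀ → x₁ ≤ x) → x₀ < x₁ →
        ((∀ x, S x = false) ↔ c x₀ x₁ = (x₀ : Fin 2))) :=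
  stmt16_general S c hc
end

section
/- There do not exist a continuous map Φ : (ℕ → Bool) → (ℕ → ℕ → Fin 2) and a continuous map Ψ : (ℕ → Bool) × (ℕ → Bool) → Bool such that for every monotone S : ℕ → Bool: Φ(S) is a stable coloring of pairs for which both sets {x : lim_y Φ(S) x y = 0} and {x : lim_y Φ(S) x y = 1} are infinite, and for every infinite set L that is limit-homogeneous for Φ(S), Ψ(S, χ_L) = true if and only if S takes the value true somewhere (where χ_L : ℕ → Bool is the characteristic function of L). (This expresses that LPO is not Weihrauch reducible to D²₂ restricted to balanced colorings, proved here for continuous reduction maps.) -/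
/-- LPO is not Weihrauch reducible to D²₂ restricted to balanced colorings,
for continuous reduction maps. Sets L ⊆ ℕ are represented by their
characteristic functions χL : ℕ → Bool. -/
theorem stmt17 :
    ¬ ∃ (Φ : (ℕ → Bool) → (ℕ → ℕ → Fin 2))
        (Ψ : (ℕ → Bool) × (ℕ → Bool) → Bool),
      Continuous Φ ∧ Continuous Ψ ∧
      ∀ S : ℕ → Bool, Monotone S →
        (∀ x, ∃ i, ∀ᶠ y in Filter.atTop, Φ S x y = i) ∧
        {x | ∀ᶠ y in Filter.atTop, Φ S x y = 0}.Infinite ∧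
        {x | ∀ᶠ y in Filter.atTop, Φ S x y = 1}.Infinite ∧
        ∀ χL : ℕ → Bool, {n | χL n = true}.Infinite →
          (∃ i, ∀ x, χL x = true → ∀ᶠ y in Filter.atTop, Φ S x y = i) →
          (Ψ (S, χL) = true ↔ ∃ x, S x = true) := by
  classical
  rintro ⟨Φ, Ψ, -, hΨ, hspec⟩
  -- Repackage Ψ as a map on a single Pi type
  set Θ : (ℕ → Bool × Bool) → Bool :=
    fun f => Ψ (fun n => (f n).1, fun n => (f n).2) with hΘdef
  have hΘ : Continuous Θ :=
    hΨ.comp ((continuous_pi fun n => (continuous_apply n).fst).prodMk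
      (continuous_pi fun n => (continuous_apply n).snd))
  set p : ℕ → Bool × Bool := fun _ => (false, false) with hp
  set b : Bool := Θ p with hb
  have hopen : IsOpen (Θ ⁻¹' {b}) := (isOpen_discrete _).preimage hΘ
  obtain ⟨I, u, hIu, hsub⟩ := isOpen_pi_iff.mp hopen p rfl
  set m : ℕ := I.sup id + 1 with hm
  have hIlt : ∀ i ∈ I, i < m := fun i hi =>
    Nat.lt_succ_of_le (Finset.le_sup (f := id) hi)
  -- key: any g vanishing below m gives Θ g = b
  have key : ∀ g : ℕ → Bool × Bool, (∀ n, n < m → g n = (false, false)) → Θ g = b := by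
    intro g hg
    have : g ∈ (I : Set ℕ).pi u := by
      intro i hi
      have : g i = p i := hg i (hIlt i hi)
      rw [this]
      exact (hIu i hi).2
    exact hsub this
  -- S₀ : constant false
  set S₀ : ℕ → Bool := fun _ => false with hS₀
  have hS₀mono : Monotone S₀ := fun _ _ _ => le_rfl
  obtain ⟨-, hA₀, -, hL₀⟩ := hspec S₀ hS₀mono
  set A₀ : Set ℕ := {x | ∀ᶠ y in Filter.atTop, Φ S₀ x y = 0} with hA₀def
  set χ₀ : ℕ → Bool := fun n => decide (n ∈ A₀ ∧ m ≤ n) with hχ₀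
  have hχ₀set : {n | χ₀ n = true} = A₀ ∩ {n | m ≤ n} := by
    ext n
    simp only [Set.mem_setOf_eq, Set.mem_inter_iff, hχ₀, decide_eq_true_eq]
  have hχ₀inf : {n | χ₀ n = true}.Infinite := by
    rw [hχ₀set]
    have : A₀ ∩ {n | m ≤ n} = A₀ \ Set.Iio m := by
      ext n; simp [Set.mem_Iio, Nat.not_lt]
    rw [this]
    exact hA₀.diff (Set.finite_Iio m)
  have hχ₀hom : ∃ i, ∀ x, χ₀ x = true → ∀ᶠ y in Filter.atTop, Φ S₀ x y = i := by
    refine ⟨0, fun x hx => ?_⟩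
    have : x ∈ A₀ ∩ {n | m ≤ n} := hχ₀set ▸ hx
    exact this.1
  have h0 : Ψ (S₀, χ₀) = false := by
    have := (hL₀ χ₀ hχ₀inf hχ₀hom)
    rcases Bool.eq_false_or_eq_true (Ψ (S₀, χ₀)) with h | h
    · exfalso
      obtain ⟨x, hx⟩ := this.mp h
      simp [hS₀] at hx
    · exact h
  have hΘ0 : Θ (fun n => (S₀ n, χ₀ n)) = b := by
    apply key
    intro n hn
    have h1 : S₀ n = false := rfl
    have h2 : χ₀ n = false := by
      simp only [hχ₀, decide_eq_false_iff_not]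
      rintro ⟨-, hmn⟩
      exact absurd hn (Nat.not_lt.mpr hmn)
    simp [h1, h2]
  have hbfalse : b = false := by
    have hx : Ψ (S₀, χ₀) = b := hΘ0
    exact hx.symm.trans h0
  -- S₁ : false below m, true from m on
  set S₁ : ℕ → Bool := fun n => decide (m ≤ n) with hS₁
  have hS₁mono : Monotone S₁ := by
    intro x y hxy
    by_cases hx : m ≤ x
    · have hy : m ≤ y := le_trans hx hxy
      simp [hS₁, hx, hy]
    · simp [hS₁, hx]
  obtain ⟨-, hA₁, -, hL₁⟩ := hspec S₁ hS₁mono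
  set A₁ : Set ℕ := {x | ∀ᶠ y in Filter.atTop, Φ S₁ x y = 0} with hA₁def
  set χ₁ : ℕ → Bool := fun n => decide (n ∈ A₁ ∧ m ≤ n) with hχ₁
  have hχ₁set : {n | χ₁ n = true} = A₁ ∩ {n | m ≤ n} := by
    ext n
    simp only [Set.mem_setOf_eq, Set.mem_inter_iff, hχ₁, decide_eq_true_eq]
  have hχ₁inf : {n | χ₁ n = true}.Infinite := by
    rw [hχ₁set]
    have : A₁ ∩ {n | m ≤ n} = A₁ \ Set.Iio m := by
      ext n; simp [Set.mem_Iio, Nat.not_lt]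
    rw [this]
    exact hA₁.diff (Set.finite_Iio m)
  have hχ₁hom : ∃ i, ∀ x, χ₁ x = true → ∀ᶠ y in Filter.atTop, Φ S₁ x y = i := by
    refine ⟨0, fun x hx => ?_⟩
    have : x ∈ A₁ ∩ {n | m ≤ n} := hχ₁set ▸ hx
    exact this.1
  have h1 : Ψ (S₁, χ₁) = true := by
    refine (hL₁ χ₁ hχ₁inf hχ₁hom).mpr ⟨m, ?_⟩
    simp [hS₁]
  have hΘ1 : Θ (fun n => (S₁ n, χ₁ n)) = b := by
    apply key
    intro n hn
    have h1' : S₁ n = false := by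
      simp [hS₁, Nat.not_le.mpr hn]
    have h2 : χ₁ n = false := by
      simp only [hχ₁, decide_eq_false_iff_not]
      rintro ⟨-, hmn⟩
      exact absurd hn (Nat.not_lt.mpr hmn)
    simp [h1', h2]
  have hx : Ψ (S₁, χ₁) = b := hΘ1
  exact absurd ((h1.symm.trans hx).trans hbfalse) (by simp)
end

section
/- Let c : ℕ → ℕ → Fin 2 be a stable coloring of pairs and let S : ℕ → Bool be monotone. Define d : ℕ → ℕ → Fin 3 by d x y = (the value c x y, viewed in Fin 3) if S x = S y, and d x y = 2 otherwise. Then: (a) d is stable; (b) every infinite homogeneous set for d has color 0 or 1 and is homogeneous for c with the same color; and (c) for every infinite homogeneous set H for d, S takes the value true somewhere if and only if S x = true for some x ≤ min H. (This construction is the combinatorial core of the reduction LPO × NON ≤_W SRT²₃.) -/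
/-- Combinatorial core of LPO × NON ≤_W SRT²₃: for stable c : [ℕ]² → 2 and
monotone S, the coloring d x y = c x y (in Fin 3) if S x = S y, else 2, is
stable; every infinite homogeneous set for d has color 0 or 1 and is
homogeneous for c with the same color; and such a set detects whether S ever
takes the value true by inspecting S up to its minimum. -/
theorem stmt18 (c : ℕ → ℕ → Fin 2) (S : ℕ → Bool) (hS : Monotone S)
    (hcstable : ∀ x, ∃ i, ∀ᶠ y in Filter.atTop, c x y = i)
    (d : ℕ → ℕ → Fin 3)
    (hd : ∀ x y, d x y =
      if S x = S y then Fin.castLE (by norm_num) (c x y) else 2) :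
    (∀ x, ∃ i, ∀ᶠ y in Filter.atTop, d x y = i) ∧
    (∀ H : Set ℕ, H.Infinite → ∀ i : Fin 3,
      (∀ x ∈ H, ∀ y ∈ H, x < y → d x y = i) →
      ∃ j : Fin 2, Fin.castLE (by norm_num) j = i ∧
        ∀ x ∈ H, ∀ y ∈ H, x < y → c x y = j) ∧
    (∀ H : Set ℕ, H.Infinite →
      (∃ i, ∀ x ∈ H, ∀ y ∈ H, x < y → d x y = i) →
      ((∃ x, S x = true) ↔ ∃ x ≤ sInf H, S x = true)) := by
  -- helper: if S n = true and n ≤ y then S y = true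
  have hup : ∀ {n y : ℕ}, S n = true → n ≤ y → S y = true := by
    intro n y hn hny
    have := hS hny
    rw [hn] at this
    exact le_antisymm (Bool.le_true _) this
  -- part (b) as a standalone fact
  have partb : ∀ H : Set ℕ, H.Infinite → ∀ i : Fin 3,
      (∀ x ∈ H, ∀ y ∈ H, x < y → d x y = i) →
      ∃ j : Fin 2, Fin.castLE (by norm_num) j = i ∧
        ∀ x ∈ H, ∀ y ∈ H, x < y → c x y = j := by
    intro H hH i hhom
    -- find a pair x < y in H with S x = S y
    have ⟨x, hx, y, hy, hxy, hSxy⟩ :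
        ∃ x ∈ H, ∃ y ∈ H, x < y ∧ S x = S y := by
      by_cases h : ∃ n, S n = true
      · obtain ⟨n, hn⟩ := h
        obtain ⟨a, ha, hna⟩ := hH.exists_gt n
        obtain ⟨b, hb, hab⟩ := hH.exists_gt a
        exact ⟨a, ha, b, hb, hab, by rw [hup hn hna.le, hup hn (hna.le.trans hab.le)]⟩
      · push_neg at h
        obtain ⟨a, ha, _⟩ := hH.exists_gt 0
        obtain ⟨b, hb, hab⟩ := hH.exists_gt a
        simp only [Bool.not_eq_true] at h
        exact ⟨a, ha, b, hb, hab, by rw [h a, h b]⟩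
    have hdi := hhom x hx y hy hxy
    rw [hd, if_pos hSxy] at hdi
    refine ⟨c x y, hdi, ?_⟩
    intro a ha b hb hab
    have hdab := hhom a ha b hb hab
    rw [hd] at hdab
    by_cases hs : S a = S b
    · rw [if_pos hs] at hdab
      have h := congrArg Fin.val (hdab.trans hdi.symm)
      simp only [Fin.coe_castLE] at h
      exact Fin.val_injective h
    · rw [if_neg hs] at hdab
      exfalso
      have h := congrArg Fin.val (hdi.trans hdab.symm)
      have : (c x y).val < 2 := (c x y).isLt
      simp only [Fin.coe_castLE] at h
      omega
  refine ⟨?_, partb, ?_⟩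
  · -- (a) stability
    intro x
    obtain ⟨i, hi⟩ := hcstable x
    by_cases hx : S x = true
    · refine ⟨Fin.castLE (by norm_num) i, ?_⟩
      filter_upwards [hi, Filter.eventually_ge_atTop x] with y hy hxy
      rw [hd, if_pos (by rw [hx, hup hx hxy]), hy]
    · by_cases h : ∃ n, S n = true
      · obtain ⟨n, hn⟩ := h
        refine ⟨2, ?_⟩
        filter_upwards [Filter.eventually_ge_atTop n] with y hny
        rw [hd, if_neg (by rw [hup hn hny]; exact hx)]
      · push_neg at h
        simp only [Bool.not_eq_true] at h
        refine ⟨Fin.castLE (by norm_num) i, ?_⟩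
        filter_upwards [hi] with y hy
        rw [hd, if_pos (by rw [h x, h y]), hy]
  · -- (c)
    intro H hH ⟨i, hhom⟩
    have hne : H.Nonempty := hH.nonempty
    have hmem : sInf H ∈ H := Nat.sInf_mem hne
    constructor
    · rintro ⟨n, hn⟩
      refine ⟨sInf H, le_refl _, ?_⟩
      by_contra hm
      simp only [Bool.not_eq_true] at hm
      obtain ⟨b, hb, hnb⟩ := hH.exists_gt (max n (sInf H))
      have hSb : S b = true := hup hn ((le_max_left _ _).trans hnb.le)
      have hlt : sInf H < b := lt_of_le_of_lt (le_max_right n _) hnb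
      have hdmb := hhom _ hmem _ hb hlt
      rw [hd, if_neg (by rw [hm, hSb]; simp)] at hdmb
      -- i = 2, contradiction with partb
      obtain ⟨j, hj, _⟩ := partb H hH i hhom
      have h := congrArg Fin.val (hj.trans hdmb.symm)
      have : (j : ℕ) < 2 := j.isLt
      simp only [Fin.coe_castLE] at h
      omega
    · rintro ⟨x, _, hx⟩
      exact ⟨x, hx⟩
end

section
/- Let k ≥ 2 and i < k. Let c : ℕ → ℕ → Fin k be a stable coloring of pairs such that the set {x : lim_y c x y = i} is finite, let ℓ : ℕ → Fin k satisfy ℓ y = i for all sufficiently large y, and let S : ℕ → Bool be monotone. Define d : ℕ → ℕ → Fin k by d x y = c x y if S x = S y, and d x y = ℓ y otherwise. Then: (a) d is stable; (b) the set {x : lim_y d x y = i} is finite; and (c) every infinite set L that is limit-homogeneous for d is limit-homogeneous for c, and moreover S takes the value true somewhere if and only if S x = true for some x ≤ min L. (This construction is the combinatorial core of the forward direction of the characterization of the thin-unbalanced version of D²_k: LPO × dwub-D²_k ≤_W D²_k.) -/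
/-- Combinatorial core of the forward direction of the characterization of
dwub-D²_k (LPO × dwub-D²_k ≤_W D²_k): given stable c : [ℕ]² → k whose set of
x with limit color i is finite, ℓ eventually equal to i, and monotone S, the
coloring d x y = c x y if S x = S y, else ℓ y, is stable; its set of x with
limit i is finite; every infinite limit-homogeneous set L for d is
limit-homogeneous for c and detects whether S ever takes the value true by
inspecting S up to min L. -/
theorem stmt19 (k : ℕ) (hk : 2 ≤ k) (i : Fin k)
    (c : ℕ → ℕ → Fin k) (ℓ : ℕ → Fin k) (S : ℕ → Bool) (hS : Monotone S)
    (hcstable : ∀ x, ∃ j, ∀ᶠ y in Filter.atTop, c x y = j)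
    (hfin : {x | ∀ᶠ y in Filter.atTop, c x y = i}.Finite)
    (hℓ : ∀ᶠ y in Filter.atTop, ℓ y = i)
    (d : ℕ → ℕ → Fin k)
    (hd : ∀ x y, d x y = if S x = S y then c x y else ℓ y) :
    (∀ x, ∃ j, ∀ᶠ y in Filter.atTop, d x y = j) ∧
    {x | ∀ᶠ y in Filter.atTop, d x y = i}.Finite ∧
    ∀ L : Set ℕ, L.Infinite →
      (∃ j, ∀ x ∈ L, ∀ᶠ y in Filter.atTop, d x y = j) →
      ((∃ j, ∀ x ∈ L, ∀ᶠ y in Filter.atTop, c x y = j) ∧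
       ((∃ x, S x = true) ↔ ∃ x ≤ sInf L, S x = true)) := by
  by_cases hst : ∃ n, S n = true
  · obtain ⟨n, hn⟩ := hst
    have hSy : ∀ y, n ≤ y → S y = true := by
      intro y hy
      have h1 : S n ≤ S y := hS hy
      rw [hn] at h1
      exact le_antisymm (Bool.le_true _) h1
    -- if S x = true, d x y = c x y eventually
    have hdc : ∀ x, S x = true → ∀ᶠ y in Filter.atTop, d x y = c x y := by
      intro x hx
      filter_upwards [Filter.eventually_ge_atTop n] with y hy
      rw [hd, if_pos (by rw [hx, hSy y hy])]
    -- if S x = false, d x y = i eventually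
    have hdi : ∀ x, S x = false → ∀ᶠ y in Filter.atTop, d x y = i := by
      intro x hx
      filter_upwards [Filter.eventually_ge_atTop n, hℓ] with y hy hly
      rw [hd, if_neg (by rw [hx, hSy y hy]; simp), hly]
    have hfalse_lt : ∀ x, S x = false → x < n := by
      intro x hx
      by_contra h
      rw [hSy x (le_of_not_gt h)] at hx
      simp at hx
    refine ⟨?_, ?_, ?_⟩
    · intro x
      rcases Bool.eq_false_or_eq_true (S x) with hx | hx
      · obtain ⟨j, hj⟩ := hcstable x
        exact ⟨j, by filter_upwards [hdc x hx, hj] with y h1 h2; rw [h1, h2]⟩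
      · exact ⟨i, hdi x hx⟩
    · apply Set.Finite.subset ((Set.finite_Iio n).union hfin)
      intro x hx
      rcases Bool.eq_false_or_eq_true (S x) with h | h
      · refine Or.inr ?_
        filter_upwards [hx, hdc x h] with y h1 h2
        rw [← h2, h1]
      · exact Or.inl (hfalse_lt x h)
    · intro L hL ⟨j, hj⟩
      have hall : ∀ x ∈ L, S x = true := by
        by_contra h
        push_neg at h
        obtain ⟨x₀, hx₀L, hx₀⟩ := h
        have hx₀f : S x₀ = false := Bool.eq_false_iff.mpr hx₀
        have hji : j = i := by
          obtain ⟨y, h1, h2⟩ := ((hj x₀ hx₀L).and (hdi x₀ hx₀f)).exists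
          rw [← h1, h2]
        have hsub : L ⊆ Set.Iio n ∪ {x | ∀ᶠ y in Filter.atTop, c x y = i} := by
          intro x hxL
          rcases Bool.eq_false_or_eq_true (S x) with h | h
          · refine Or.inr ?_
            filter_upwards [hj x hxL, hdc x h] with y h1 h2
            rw [← h2, h1, hji]
          · exact Or.inl (hfalse_lt x h)
        exact hL (Set.Finite.subset ((Set.finite_Iio n).union hfin) hsub)
      refine ⟨⟨j, fun x hx => ?_⟩, ?_⟩
      · filter_upwards [hj x hx, hdc x (hall x hx)] with y h1 h2
        rw [← h2, h1]
      · constructor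
        · intro _
          have hmem : sInf L ∈ L := Nat.sInf_mem hL.nonempty
          exact ⟨sInf L, le_refl _, hall _ hmem⟩
        · rintro ⟨x, _, hx⟩
          exact ⟨x, hx⟩
  · push_neg at hst
    have hSf : ∀ x, S x = false := fun x => Bool.eq_false_iff.mpr (hst x)
    have hdc : ∀ x y, d x y = c x y := by
      intro x y
      rw [hd, if_pos (by rw [hSf x, hSf y])]
    refine ⟨?_, ?_, ?_⟩
    · intro x
      obtain ⟨j, hj⟩ := hcstable x
      exact ⟨j, by filter_upwards [hj] with y h; rw [hdc, h]⟩
    · apply Set.Finite.subset hfin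
      intro x hx
      filter_upwards [hx] with y h
      rw [← hdc, h]
    · intro L hL ⟨j, hj⟩
      refine ⟨⟨j, fun x hx => by filter_upwards [hj x hx] with y h; rw [← hdc, h]⟩, ?_⟩
      constructor
      · rintro ⟨x, hx⟩
        exact absurd hx (hst x)
      · rintro ⟨x, _, hx⟩
        exact absurd hx (hst x)
end
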